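/- arXiv:2506.07472 — 7 statements merged into one kernel-verified Lean document; each statement's English description precedes it below -/
import Mathlib

section
/- Let f, g ∈ 𝒢. Then f ≾ g if and only if PSI(f) ⊆ PSI(g). -/
open MeasureTheory Filter Set

section Defs

variable {Ω : Type*} [MeasurableSpace Ω]

/-- An atomless probability space: every event can be split to achieve any smaller measure
(Sierpiński's property, equivalent to atomlessness for probability measures). -/
def Atomless (P : Measure Ω) : Prop :=
  ∀ A : Set Ω, MeasurableSet A → ∀ r : ENNReal, r ≤ P A →
    ∃ B : Set Ω, B ⊆ A ∧ MeasurableSet B ∧ P B = r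

/-- `A` is a tail event for `X`: outside a null set, `X ω ≥ X ω'` for `ω ∈ A`, `ω' ∈ Aᶜ`. -/
def IsTailEvent (P : Measure Ω) (X : Ω → ℝ) (A : Set Ω) : Prop :=
  MeasurableSet A ∧ ∃ N : Set Ω, P N = 0 ∧
    ∀ ω ∈ A, ω ∉ N → ∀ ω' ∈ Aᶜ, ω' ∉ N → X ω' ≤ X ω

/-- `A` is a `p`-tail event for `X`: a tail event with `P A = 1 - p`. -/
def IsPTailEvent (P : Measure Ω) (X : Ω → ℝ) (p : ℝ) (A : Set Ω) : Prop :=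
  IsTailEvent P X A ∧ P A = ENNReal.ofReal (1 - p)

/-- A random vector is `p`-concentrated if a single event is a `p`-tail event for every
component. -/
def PConcentrated (P : Measure Ω) {d : ℕ} (X : Fin d → Ω → ℝ) (p : ℝ) : Prop :=
  ∃ A : Set Ω, ∀ i, IsPTailEvent P (X i) p A

/-- A random vector is `K`-concentrated if it is `p`-concentrated for every `p ∈ K`. -/
def KConcentrated (P : Measure Ω) {d : ℕ} (X : Fin d → Ω → ℝ) (K : Set ℝ) : Prop :=
  ∀ p ∈ K, PConcentrated P X p

/-- Left quantile function `Q_X⁻(p) = inf {x | ℙ(X ≤ x) ≥ p}` (also `VaR_p`). -/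
noncomputable def leftQuantile (P : Measure Ω) (X : Ω → ℝ) (p : ℝ) : ℝ :=
  sInf {x : ℝ | ENNReal.ofReal p ≤ P {ω | X ω ≤ x}}

/-- Right quantile function `Q_X⁺(p) = inf {x | ℙ(X ≤ x) > p}` (also `VaR⁺_p`). -/
noncomputable def rightQuantile (P : Measure Ω) (X : Ω → ℝ) (p : ℝ) : ℝ :=
  sInf {x : ℝ | ENNReal.ofReal p < P {ω | X ω ≤ x}}

/-- `Q_X : [0,1] → ℝ`, equal to `Q_X⁺` at `0` and to `Q_X⁻` on `(0,1]`. -/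
noncomputable def Q (P : Measure Ω) (X : Ω → ℝ) (p : ℝ) : ℝ :=
  if p = 0 then rightQuantile P X 0 else leftQuantile P X p

/-- Membership in L∞: essentially bounded (and measurable) random variables. -/
def MemLinf (P : Measure Ω) (X : Ω → ℝ) : Prop :=
  Measurable X ∧ ∃ C : ℝ, ∀ᵐ ω ∂P, |X ω| ≤ C

/-- A functional `ρ` on L∞ is `K`-additive if it is additive on every `K`-concentrated
random vector (of dimension `d ≥ 2`) with essentially bounded components. -/
def KAdditive (P : Measure Ω) (K : Set ℝ) (ρ : (Ω → ℝ) → ℝ) : Prop :=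
  ∀ d : ℕ, 2 ≤ d → ∀ X : Fin d → Ω → ℝ, (∀ i, MemLinf P (X i)) →
    KConcentrated P X K → ρ (∑ i, X i) = ∑ i, ρ (X i)

/-- A pair of random variables is comonotonic. -/
def ComonotonePair (P : Measure Ω) (X Z : Ω → ℝ) : Prop :=
  ∀ᵐ w ∂(P.prod P), 0 ≤ (X w.1 - X w.2) * (Z w.1 - Z w.2)

/-- A random vector is `g`-comonotonic: some random variable `Z` with quantile function `g`
on `[0,1]` is comonotonic with every component. -/
def GComonotone (P : Measure Ω) {d : ℕ} (g : ℝ → ℝ) (X : Fin d → Ω → ℝ) : Prop :=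
  ∃ Z : Ω → ℝ, Measurable Z ∧ (∀ p ∈ Icc (0:ℝ) 1, Q P Z p = g p) ∧
    ∀ i, ComonotonePair P (X i) Z

/-- A functional `ρ` on L∞ is `g`-additive if it is additive on every `g`-comonotonic
random vector (of dimension `d ≥ 2`) with essentially bounded components. -/
def GAdditive (P : Measure Ω) (g : ℝ → ℝ) (ρ : (Ω → ℝ) → ℝ) : Prop :=
  ∀ d : ℕ, 2 ≤ d → ∀ X : Fin d → Ω → ℝ, (∀ i, MemLinf P (X i)) →
    GComonotone P g X → ρ (∑ i, X i) = ∑ i, ρ (X i)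

/-- The distortion riskmetric `I_h`. -/
noncomputable def distortionRM (P : Measure Ω) (h : ℝ → ℝ) (X : Ω → ℝ) : ℝ :=
  (∫ x in Iio (0:ℝ), (h ((P {ω | x < X ω}).toReal) - h 1)) +
    ∫ x in Ioi (0:ℝ), h ((P {ω | x < X ω}).toReal)

/-- The spectral risk measure `ρ_g(X) = ∫₀¹ g(t) Q_X(t) dt`. -/
noncomputable def specRM (P : Measure Ω) (g : ℝ → ℝ) (X : Ω → ℝ) : ℝ :=
  ∫ t in (0:ℝ)..1, g t * Q P X t

/-- Expected Shortfall at level `p`. -/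
noncomputable def ES (P : Measure Ω) (p : ℝ) (X : Ω → ℝ) : ℝ :=
  (1 - p)⁻¹ * ∫ q in p..1, leftQuantile P X q

end Defs

/-- The class 𝒢 of increasing functions on `[0,1]`, right-continuous at `0` and
left-continuous on `(0,1]`. -/
def MemG (g : ℝ → ℝ) : Prop :=
  MonotoneOn g (Icc 0 1) ∧
    Tendsto g (nhdsWithin 0 (Ioi 0)) (nhds (g 0)) ∧
    ∀ p ∈ Ioc (0:ℝ) 1, Tendsto g (nhdsWithin p (Iio p)) (nhds (g p))

/-- `p` is a point of strict increase on the right of `g`. -/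
def IsPSIR (g : ℝ → ℝ) (p : ℝ) : Prop :=
  p ∈ Ico (0:ℝ) 1 ∧ ∀ s ∈ Ioc p 1, g p < g s

/-- `p` is a point of strict increase on the left of `g`. -/
def IsPSIL (g : ℝ → ℝ) (p : ℝ) : Prop :=
  p ∈ Ioc (0:ℝ) 1 ∧ ∀ s ∈ Ico (0:ℝ) p, g s < g p

/-- The set of points of strict increase of `g`. -/
def PSI (g : ℝ → ℝ) : Set ℝ :=
  {p | IsPSIR g p ∨ IsPSIL g p}

/-- `f ≾ g`: there is an increasing `h` with `f = h ∘ g` a.e. on `[0,1]`. -/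
def Prec (f g : ℝ → ℝ) : Prop :=
  ∃ h : ℝ → ℝ, Monotone h ∧
    ∀ᵐ t ∂(volume.restrict (Icc (0:ℝ) 1)), f t = h (g t)

/-- The map `𝒱 : K ↦ (p ↦ sup ((0,p) ∩ K))` (with `sup ∅ = 0`, the junk value of `sSup` in `ℝ`). -/
noncomputable def VK (K : Set ℝ) (p : ℝ) : ℝ :=
  sSup (Ioo (0:ℝ) p ∩ K)

/-- A risk spectrum: a nonnegative element of 𝒢 integrating to 1. -/
def IsRiskSpectrum (g : ℝ → ℝ) : Prop :=
  MemG g ∧ (∀ t ∈ Icc (0:ℝ) 1, 0 ≤ g t) ∧ (∫ t in (0:ℝ)..1, g t) = 1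
section StmtSevenAux

variable {f g : ℝ → ℝ}

/-- If `f` is constant on `(a,b)` and left-continuous at `b`, then `f b` equals that constant. -/
lemma memG_left_const (hf : MemG f) {a b c : ℝ} (hab : a < b) (hb : b ∈ Ioc (0:ℝ) 1)
    (hc : ∀ t ∈ Ioo a b, f t = c) : f b = c := by
  have h1 : Tendsto f (nhdsWithin b (Iio b)) (nhds (f b)) := hf.2.2 b hb
  have h2 : Tendsto f (nhdsWithin b (Iio b)) (nhds c) := by
    refine Tendsto.congr' ?_ tendsto_const_nhds
    filter_upwards [Ioo_mem_nhdsLT_of_mem (show b ∈ Ioc a b from ⟨hab, le_refl b⟩)] with t ht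
    exact (hc t ht).symm
  exact tendsto_nhds_unique h1 h2

/-- If `f` is constant on `(0,b)` and right-continuous at `0`, then `f 0` equals that constant. -/
lemma memG_right_const (hf : MemG f) {b c : ℝ} (hb : 0 < b)
    (hc : ∀ t ∈ Ioo (0:ℝ) b, f t = c) : f 0 = c := by
  have h1 : Tendsto f (nhdsWithin 0 (Ioi 0)) (nhds (f 0)) := hf.2.1
  have h2 : Tendsto f (nhdsWithin 0 (Ioi 0)) (nhds c) := by
    refine Tendsto.congr' ?_ tendsto_const_nhds
    filter_upwards [Ioo_mem_nhdsGT_of_mem (show (0:ℝ) ∈ Ico (0:ℝ) b from ⟨le_refl 0, hb⟩)] with t ht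
    exact (hc t ht).symm
  exact tendsto_nhds_unique h1 h2

/-- If `f = h ∘ g` a.e. on `[0,1]` and `g a = g b`, then `f` is constant (equal to `h (g a)`)
on `(a,b)`. -/
lemma const_of_ae (hf : MemG f) (hg : MemG g) {h : ℝ → ℝ}
    (hae : ∀ᵐ t ∂(volume.restrict (Icc (0:ℝ) 1)), f t = h (g t))
    {a b : ℝ} (ha : 0 ≤ a) (hb : b ≤ 1) (hab : a < b) (hgab : g a = g b) :
    ∀ t ∈ Ioo a b, f t = h (g a) := by
  have hN : volume ({t : ℝ | ¬ f t = h (g t)} ∩ Icc (0:ℝ) 1) = 0 := by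
    have := hae
    rw [ae_iff, Measure.restrict_apply' measurableSet_Icc] at this
    exact this
  have hne : ∀ x y : ℝ, 0 ≤ x → y ≤ 1 → x < y → ∃ r, r ∈ Ioo x y ∧ f r = h (g r) := by
    intro x y hx hy hxy
    by_contra hcon
    push_neg at hcon
    have hsub : Ioo x y ⊆ {t : ℝ | ¬ f t = h (g t)} ∩ Icc (0:ℝ) 1 := by
      intro r hr
      exact ⟨hcon r hr, ⟨le_of_lt (lt_of_le_of_lt hx hr.1), le_of_lt (lt_of_lt_of_le hr.2 hy)⟩⟩
    have h0 := measure_mono_null hsub hN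
    rw [Real.volume_Ioo] at h0
    rw [ENNReal.ofReal_eq_zero] at h0
    linarith
  intro t ht
  have haI : a ∈ Icc (0:ℝ) 1 := ⟨ha, le_trans hab.le hb⟩
  have hbI : b ∈ Icc (0:ℝ) 1 := ⟨le_trans ha hab.le, hb⟩
  have htI : t ∈ Icc (0:ℝ) 1 := ⟨by linarith [ht.1], by linarith [ht.2]⟩
  obtain ⟨r, hr, hfr⟩ := hne a t ha htI.2 ht.1
  obtain ⟨r', hr', hfr'⟩ := hne t b htI.1 hb ht.2
  have hrI : r ∈ Icc (0:ℝ) 1 := ⟨by linarith [hr.1], by linarith [hr.2, ht.2]⟩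
  have hr'I : r' ∈ Icc (0:ℝ) 1 := ⟨by linarith [hr'.1, ht.1], by linarith [hr'.2]⟩
  have hgr : g r = g a := le_antisymm
    (hgab ▸ hg.1 hrI hbI (by linarith [hr.2, ht.2])) (hg.1 haI hrI hr.1.le)
  have hgr' : g r' = g a := le_antisymm
    (hgab ▸ hg.1 hr'I hbI hr'.2.le) (hg.1 haI hr'I (by linarith [hr'.1, ht.1]))
  have h1 : f r ≤ f t := hf.1 hrI htI hr.2.le
  have h2 : f t ≤ f r' := hf.1 htI hr'I hr'.1.le
  rw [hfr, hgr] at h1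
  rw [hfr', hgr'] at h2
  exact le_antisymm h2 h1

/-- If `PSI f ⊆ PSI g` and `g a = g b` with `a < b`, then `f` is constant on `(a,b)`. -/
lemma const_of_psi (hf : MemG f) (hg : MemG g) (hsub : PSI f ⊆ PSI g)
    {a b : ℝ} (ha : 0 ≤ a) (hb : b ≤ 1) (hab : a < b) (hgab : g a = g b) :
    ∀ x ∈ Ioo a b, ∀ y ∈ Ioo a b, f x = f y := by
  have haI : a ∈ Icc (0:ℝ) 1 := ⟨ha, le_trans hab.le hb⟩
  have hbI : b ∈ Icc (0:ℝ) 1 := ⟨le_trans ha hab.le, hb⟩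
  have memI : ∀ p ∈ Ioo a b, p ∈ Icc (0:ℝ) 1 := fun p hp =>
    ⟨by linarith [hp.1], by linarith [hp.2]⟩
  have hwit : ∀ p ∈ Ioo a b,
      (∃ u, u ∈ Ico (0:ℝ) p ∧ f p ≤ f u) ∧ ∃ v, v ∈ Ioc p 1 ∧ f v ≤ f p := by
    intro p hp
    have hpI := memI p hp
    have hp0 : 0 < p := lt_of_le_of_lt ha hp.1
    have hp1 : p < 1 := lt_of_lt_of_le hp.2 hb
    have hng : p ∉ PSI g := by
      rintro (⟨-, hR⟩ | ⟨-, hL⟩)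
      · have h1 : g p < g b := hR b ⟨hp.2, hb⟩
        have h2 : g a ≤ g p := hg.1 haI hpI hp.1.le
        rw [← hgab] at h1; linarith
      · have h1 : g a < g p := hL a ⟨ha, hp.1⟩
        have h2 : g p ≤ g b := hg.1 hpI hbI hp.2.le
        rw [← hgab] at h2; linarith
    have hnf : p ∉ PSI f := fun hmem => hng (hsub hmem)
    have hnR : ¬ IsPSIR f p := fun hh => hnf (Or.inl hh)
    have hnL : ¬ IsPSIL f p := fun hh => hnf (Or.inr hh)
    unfold IsPSIR at hnR; unfold IsPSIL at hnL
    push_neg at hnR hnL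
    obtain ⟨v, hv, hfv⟩ := hnR ⟨hp0.le, hp1⟩
    obtain ⟨u, hu, hfu⟩ := hnL ⟨hp0, hp1.le⟩
    exact ⟨⟨u, hu, hfu⟩, ⟨v, hv, hfv⟩⟩
  have main : ∀ x ∈ Ioo a b, ∀ y ∈ Ioo a b, x < y → f x = f y := by
    intro x hx y hy hxy
    by_contra hne
    have hlt : f x < f y := lt_of_le_of_ne (hf.1 (memI x hx) (memI y hy) hxy.le) hne
    set S := {r : ℝ | r ∈ Icc x y ∧ f r = f x} with hSdef
    have hxS : x ∈ S := ⟨⟨le_refl x, hxy.le⟩, rfl⟩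
    have hSne : S.Nonempty := ⟨x, hxS⟩
    have hSbdd : BddAbove S := ⟨y, fun r hr => hr.1.2⟩
    set c := sSup S with hcdef
    have hcx : x ≤ c := le_csSup hSbdd hxS
    have hcy : c ≤ y := csSup_le hSne (fun r hr => hr.1.2)
    have hcab : c ∈ Ioo a b := ⟨lt_of_lt_of_le hx.1 hcx, lt_of_le_of_lt hcy hy.2⟩
    have hcI := memI c hcab
    obtain ⟨⟨u, hu, hfu⟩, ⟨v, hv, hfv⟩⟩ := hwit c hcab
    have huI : u ∈ Icc (0:ℝ) 1 := ⟨hu.1, by linarith [hu.2, hcI.2]⟩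
    have hfu' : f u = f c := le_antisymm (hf.1 huI hcI hu.2.le) hfu
    -- f c = f x
    have hfcx : f c = f x := by
      rcases lt_or_ge u x with hcase | hcase
      · have h1 : f u ≤ f x := hf.1 huI (memI x hx) hcase.le
        have h2 : f x ≤ f c := hf.1 (memI x hx) hcI hcx
        linarith [hfu'.le, hfu'.ge]
      · rcases eq_or_lt_of_le hcx with heq | hlt'
        · rw [← heq]
        · obtain ⟨r, hrS, hur⟩ := exists_lt_of_lt_csSup hSne (show u < sSup S from hcdef ▸ hu.2)
          have hrc : r ≤ c := le_csSup hSbdd hrS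
          have hrI : r ∈ Icc (0:ℝ) 1 := ⟨by linarith [hrS.1.1, hx.1], by linarith [hrS.1.2, hy.2, hb]⟩
          have h1 : f u ≤ f r := hf.1 huI hrI hur.le
          have h2 : f r ≤ f c := hf.1 hrI hcI hrc
          have : f r = f c := le_antisymm h2 (by linarith [hfu'.ge])
          rw [← this, hrS.2]
    have hvc : c < v := hv.1
    have hvI : v ∈ Icc (0:ℝ) 1 := ⟨by linarith [hcI.1], hv.2⟩
    have hfvx : f v = f x := le_antisymm (by linarith [hfv, hfcx.le]) (by
      calc f x = f c := hfcx.symm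
      _ ≤ f v := hf.1 hcI hvI hvc.le)
    have hvy : v < y := by
      by_contra hcon
      push_neg at hcon
      have : f y ≤ f v := hf.1 (memI y hy) hvI hcon
      rw [hfvx] at this; linarith
    have hvS : v ∈ S := ⟨⟨by linarith, hvy.le⟩, hfvx⟩
    have : v ≤ c := le_csSup hSbdd hvS
    linarith
  intro x hx y hy
  rcases lt_trichotomy x y with hh | hh | hh
  · exact main x hx y hy hh
  · rw [hh]
  · exact (main y hy x hx hh).symm

end StmtSevenAux

/-- For `f, g ∈ 𝒢`, `f ≾ g` iff `PSI(f) ⊆ PSI(g)`. -/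
theorem stmt_7 (f g : ℝ → ℝ) (hf : MemG f) (hg : MemG g) :
    Prec f g ↔ PSI f ⊆ PSI g := by
  constructor
  · -- forward
    rintro ⟨h, hmono, hae⟩ p hp
    by_contra hnp
    have hconst : ∀ a b : ℝ, 0 ≤ a → b ≤ 1 → a < b → g a = g b →
        ∀ t ∈ Ioo a b, f t = h (g a) := fun a b => const_of_ae hf hg hae
    cases hp with
    | inl hR =>
      obtain ⟨⟨hp0, hp1⟩, hstrict⟩ := hR
      have hnR : ¬ IsPSIR g p := fun hh => hnp (Or.inl hh)
      unfold IsPSIR at hnR; push_neg at hnR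
      obtain ⟨s, hs, hgs⟩ := hnR ⟨hp0, hp1⟩
      have hpI : p ∈ Icc (0:ℝ) 1 := ⟨hp0, hp1.le⟩
      have hsI : s ∈ Icc (0:ℝ) 1 := ⟨by linarith [hs.1], hs.2⟩
      have hgps : g p = g s := le_antisymm (hg.1 hpI hsI hs.1.le) hgs
      rcases eq_or_lt_of_le hp0 with h0 | h0
      · -- p = 0
        have hc := hconst p s hp0 hs.2 hs.1 hgps
        have hfp : f p = h (g p) := by
          rw [← h0] at hc ⊢
          exact memG_right_const hf (by linarith [hs.1, h0]) hc
        have hfs : f s = h (g p) :=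
          memG_left_const hf hs.1 ⟨by linarith [hs.1, h0], hs.2⟩ hc
        have := hstrict s hs
        rw [hfp, hfs] at this
        exact lt_irrefl _ this
      · have hnL : ¬ IsPSIL g p := fun hh => hnp (Or.inr hh)
        unfold IsPSIL at hnL; push_neg at hnL
        obtain ⟨u, hu, hgu⟩ := hnL ⟨h0, hp1.le⟩
        have huI : u ∈ Icc (0:ℝ) 1 := ⟨hu.1, by linarith [hu.2]⟩
        have hgup : g u = g p := le_antisymm (hg.1 huI hpI hu.2.le) hgu
        have hgus : g u = g s := hgup.trans hgps
        have hc := hconst u s hu.1 hs.2 (lt_trans hu.2 hs.1) hgus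
        have hfp : f p = h (g u) := hc p ⟨hu.2, hs.1⟩
        have hfs : f s = h (g u) :=
          memG_left_const hf (lt_trans hu.2 hs.1) ⟨by linarith [hs.1], hs.2⟩ hc
        have := hstrict s hs
        rw [hfp, hfs] at this
        exact lt_irrefl _ this
    | inr hL =>
      obtain ⟨⟨hp0, hp1⟩, hstrict⟩ := hL
      have hnL : ¬ IsPSIL g p := fun hh => hnp (Or.inr hh)
      unfold IsPSIL at hnL; push_neg at hnL
      obtain ⟨u, hu, hgu⟩ := hnL ⟨hp0, hp1⟩
      have hpI : p ∈ Icc (0:ℝ) 1 := ⟨hp0.le, hp1⟩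
      have huI : u ∈ Icc (0:ℝ) 1 := ⟨hu.1, by linarith [hu.2]⟩
      have hgup : g u = g p := le_antisymm (hg.1 huI hpI hu.2.le) hgu
      have hc := hconst u p hu.1 hp1 hu.2 hgup
      have hfp : f p = h (g u) := memG_left_const hf hu.2 ⟨hp0, hp1⟩ hc
      set m := (u + p) / 2 with hm
      have hmI : m ∈ Ioo u p := ⟨by simp [hm]; linarith [hu.2], by simp [hm]; linarith [hu.2]⟩
      have hfm : f m = h (g u) := hc m hmI
      have := hstrict m ⟨by linarith [hu.1, hmI.1], hmI.2⟩
      rw [hfp, hfm] at this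
      exact lt_irrefl _ this
  · -- backward
    intro hsub
    classical
    set A : ℝ → Set ℝ := fun x => insert (f 0) (f '' {s | s ∈ Icc (0:ℝ) 1 ∧ g s ≤ x}) with hA
    have hbdd : ∀ x, BddAbove (A x) := by
      intro x
      refine ⟨f 1, ?_⟩
      rintro z (rfl | ⟨s, hs, rfl⟩)
      · exact hf.1 ⟨le_refl 0, zero_le_one⟩ ⟨zero_le_one, le_refl 1⟩ zero_le_one
      · exact hf.1 hs.1 ⟨zero_le_one, le_refl 1⟩ hs.1.2
    have hne : ∀ x, (A x).Nonempty := fun x => ⟨f 0, mem_insert _ _⟩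
    set h : ℝ → ℝ := fun x => sSup (A x) with hh
    have hmono : Monotone h := by
      intro x y hxy
      refine csSup_le_csSup (hbdd y) (hne x) ?_
      rintro z (rfl | ⟨s, hs, rfl⟩)
      · exact mem_insert _ _
      · exact mem_insert_of_mem _ ⟨s, ⟨hs.1, le_trans hs.2 hxy⟩, rfl⟩
    refine ⟨h, hmono, ?_⟩
    set D : Set ℝ := {t | t ∈ Ico (0:ℝ) 1 ∧ ∃ s, s ∈ Ioc t 1 ∧ g s = g t ∧ f t < f s} with hD
    -- pointwise equality off D
    have hpt : ∀ t ∈ Icc (0:ℝ) 1, t ∉ D → f t = h (g t) := by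
      intro t htI htD
      have h1 : f t ≤ h (g t) :=
        le_csSup (hbdd _) (mem_insert_of_mem _ ⟨t, ⟨htI, le_refl _⟩, rfl⟩)
      have h2 : h (g t) ≤ f t := by
        refine csSup_le (hne _) ?_
        rintro z (rfl | ⟨s, hs, rfl⟩)
        · exact hf.1 ⟨le_refl 0, zero_le_one⟩ htI htI.1
        · rcases le_or_gt s t with hst | hst
          · exact hf.1 hs.1 htI hst
          · have hgst : g s = g t := le_antisymm hs.2 (hg.1 htI hs.1 hst.le)
            by_contra hcon
            push_neg at hcon
            exact htD ⟨⟨htI.1, lt_of_lt_of_le hst hs.1.2⟩, s, ⟨hst, hs.1.2⟩, hgst, hcon⟩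
      exact le_antisymm h1 h2
    -- D is countable
    have hDq : ∀ t ∈ D, ∃ q : ℚ, f t < (q : ℝ) ∧
        ∃ s, t < s ∧ ∀ r, t < r → r < s → (q : ℝ) < f r := by
      rintro t ⟨ht, s, hs, hgs, hfs⟩
      have hconst := const_of_psi hf hg hsub ht.1 hs.2 hs.1 hgs.symm
      set m := (t + s) / 2 with hm
      have hmI : m ∈ Ioo t s := ⟨by simp [hm]; linarith [hs.1], by simp [hm]; linarith [hs.1]⟩
      have hfsm : f s = f m :=
        memG_left_const hf hs.1 ⟨lt_of_le_of_lt ht.1 hs.1, hs.2⟩ (fun r hr => hconst r hr m hmI)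
      obtain ⟨q, hq1, hq2⟩ := exists_rat_btwn (show f t < f m from hfsm ▸ hfs)
      refine ⟨q, hq1, s, hs.1, fun r hr1 hr2 => ?_⟩
      have : f r = f m := hconst r ⟨hr1, hr2⟩ m hmI
      rw [this]; exact hq2
    have hDcount : D.Countable := by
      have hF : ∀ t : D, ∃ q : ℚ, f t < (q : ℝ) ∧
          ∃ s, (t : ℝ) < s ∧ ∀ r, (t : ℝ) < r → r < s → (q : ℝ) < f r :=
        fun t => hDq t t.2
      choose F hF1 s' hs'1 hs'2 using hF
      have key : ∀ t₁ t₂ : D, (t₁ : ℝ) < t₂ → F t₁ ≠ F t₂ := by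
        intro t₁ t₂ hlt heq
        have h1I : (t₁ : ℝ) ∈ Ico (0:ℝ) 1 := t₁.2.1
        have h2I : (t₂ : ℝ) ∈ Ico (0:ℝ) 1 := t₂.2.1
        set r := ((t₁ : ℝ) + min (s' t₁) (t₂ : ℝ)) / 2 with hr
        have hmin : (t₁ : ℝ) < min (s' t₁) (t₂ : ℝ) := lt_min (hs'1 t₁) hlt
        have hr1 : (t₁ : ℝ) < r := by simp only [hr]; linarith
        have hr2 : r < s' t₁ := by
          have := min_le_left (s' t₁) (t₂ : ℝ); simp only [hr]; linarith
        have hr3 : r < (t₂ : ℝ) := by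
          have := min_le_right (s' t₁) (t₂ : ℝ); simp only [hr]; linarith
        have hq : (F t₁ : ℝ) < f r := hs'2 t₁ r hr1 hr2
        have hrI : r ∈ Icc (0:ℝ) 1 := ⟨by linarith [h1I.1], by linarith [h2I.2]⟩
        have : f r ≤ f (t₂ : ℝ) := hf.1 hrI ⟨h2I.1, h2I.2.le⟩ hr3.le
        have hq2 : f (t₂ : ℝ) < (F t₂ : ℝ) := hF1 t₂
        rw [← heq] at hq2
        linarith
      have hinj : Function.Injective F := by
        intro t₁ t₂ heq
        by_contra hne
        have hne' : (t₁ : ℝ) ≠ (t₂ : ℝ) := fun hh => hne (Subtype.ext hh)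
        rcases lt_or_gt_of_ne hne' with hh | hh
        · exact key t₁ t₂ hh heq
        · exact key t₂ t₁ hh heq.symm
      exact Set.countable_iff_exists_injective.mpr
        ⟨fun t => Encodable.encode (F t), fun a b hab =>
          hinj (Encodable.encode_injective hab)⟩
    rw [ae_iff, Measure.restrict_apply' measurableSet_Icc]
    refine measure_mono_null ?_ (hDcount.measure_zero _)
    intro t ⟨hne', htI⟩
    by_contra htD
    exact hne' (hpt t htI htD)
end

section
/- For every g ∈ 𝒢, the set PSI(g) is a closed subset of [0,1]. -/
open MeasureTheory Filter Set

private lemma notPSI_helper {g : ℝ → ℝ} (hm : MonotoneOn g (Icc 0 1))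
    {r s q : ℝ} (hr : 0 ≤ r) (hs : s ≤ 1) (hrq : r < q) (hqs : q < s)
    (hgs : g s ≤ g r) : q ∉ PSI g := by
  have hq0 : 0 < q := lt_of_le_of_lt hr hrq
  have hq1 : q < 1 := lt_of_lt_of_le hqs hs
  have hrI : r ∈ Icc (0:ℝ) 1 := ⟨hr, le_of_lt (lt_trans hrq hq1)⟩
  have hqI : q ∈ Icc (0:ℝ) 1 := ⟨hq0.le, hq1.le⟩
  have hsI : s ∈ Icc (0:ℝ) 1 := ⟨le_of_lt (lt_trans hq0 hqs), hs⟩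
  have h1 : g r ≤ g q := hm hrI hqI hrq.le
  have h2 : g q ≤ g s := hm hqI hsI hqs.le
  rintro (⟨_, hR⟩ | ⟨_, hL⟩)
  · exact absurd (hR s ⟨hqs, hs⟩) (not_lt.mpr (le_trans hgs h1))
  · exact absurd (hL r ⟨hr, hrq⟩) (not_lt.mpr (le_trans h2 hgs))

private lemma notPSI_out {g : ℝ → ℝ} {q : ℝ} (h : q < 0 ∨ 1 < q) : q ∉ PSI g := by
  rintro (⟨⟨h1, h2⟩, _⟩ | ⟨⟨h1, h2⟩, _⟩) <;> rcases h with h | h <;> linarith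

/-- For every `g ∈ 𝒢`, `PSI(g)` is a closed subset of `[0,1]`. -/
theorem stmt_8 (g : ℝ → ℝ) (hg : MemG g) :
    IsClosed (PSI g) ∧ PSI g ⊆ Icc (0:ℝ) 1 := by
  have hm := hg.1
  constructor
  · rw [← isOpen_compl_iff, isOpen_iff_mem_nhds]
    intro x hx
    rcases lt_or_ge x 0 with h0 | h0
    · exact Filter.mem_of_superset (Iio_mem_nhds h0)
        fun q hq => notPSI_out (Or.inl hq)
    rcases lt_or_ge 1 x with h1 | h1
    · exact Filter.mem_of_superset (Ioi_mem_nhds h1)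
        fun q hq => notPSI_out (Or.inr hq)
    -- x ∈ [0,1]
    have hnR : ¬ IsPSIR g x := fun h => hx (Or.inl h)
    have hnL : ¬ IsPSIL g x := fun h => hx (Or.inr h)
    rcases eq_or_lt_of_le h0 with rfl | hx0
    · -- x = 0 : get s from ¬PSIR
      simp only [IsPSIR, not_and, not_forall] at hnR
      obtain ⟨s, hsIoc, hgs⟩ := hnR ⟨le_refl 0, zero_lt_one⟩
      push_neg at hgs
      refine Filter.mem_of_superset (Iio_mem_nhds hsIoc.1) fun q hq => ?_
      rcases lt_trichotomy q 0 with hq0 | rfl | hq0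
      · exact notPSI_out (Or.inl hq0)
      · exact hx
      · exact notPSI_helper hm le_rfl hsIoc.2 hq0 hq hgs
    rcases eq_or_lt_of_le h1 with rfl | hx1
    · -- x = 1 : get r from ¬PSIL
      simp only [IsPSIL, not_and, not_forall] at hnL
      obtain ⟨r, hrIco, hgr⟩ := hnL ⟨zero_lt_one, le_refl 1⟩
      push_neg at hgr
      refine Filter.mem_of_superset (Ioi_mem_nhds hrIco.2) fun q hq => ?_
      rcases lt_trichotomy q 1 with hq1 | rfl | hq1
      · exact notPSI_helper hm hrIco.1 le_rfl hq hq1 hgr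
      · exact hx
      · exact notPSI_out (Or.inr hq1)
    · -- 0 < x < 1
      simp only [IsPSIR, not_and, not_forall] at hnR
      simp only [IsPSIL, not_and, not_forall] at hnL
      obtain ⟨s, hsIoc, hgs⟩ := hnR ⟨hx0.le, hx1⟩
      obtain ⟨r, hrIco, hgr⟩ := hnL ⟨hx0, hx1.le⟩
      push_neg at hgs hgr
      have hIsr : x ∈ Icc (0:ℝ) 1 := ⟨hx0.le, hx1.le⟩
      have hgsr : g s ≤ g r := le_trans hgs hgr
      refine Filter.mem_of_superset (Ioo_mem_nhds hrIco.2 hsIoc.1) fun q hq => ?_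
      exact notPSI_helper hm hrIco.1 hsIoc.2 hq.1 hq.2 hgsr
  · rintro p (⟨⟨h1, h2⟩, _⟩ | ⟨⟨h1, h2⟩, _⟩)
    · exact ⟨h1, h2.le⟩
    · exact ⟨h1.le, h2⟩
end

section
/- For every closed subset K of [0,1], the function 𝒱(K) is increasing, right-continuous at 0, and left-continuous at every point of (0,1]; that is, 𝒱(K) ∈ 𝒢. -/
open MeasureTheory Filter Set

lemma VK_nonneg (K : Set ℝ) (p : ℝ) : 0 ≤ VK K p :=
  Real.sSup_nonneg (fun x hx => le_of_lt hx.1.1)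

lemma VK_bddAbove (K : Set ℝ) (p : ℝ) : BddAbove (Ioo (0:ℝ) p ∩ K) :=
  ⟨p, fun x hx => le_of_lt hx.1.2⟩

lemma VK_le (K : Set ℝ) {p : ℝ} (hp : 0 ≤ p) : VK K p ≤ p :=
  Real.sSup_le (fun x hx => le_of_lt hx.1.2) hp

lemma VK_mono (K : Set ℝ) : Monotone (VK K) := by
  intro q p hqp
  refine Real.sSup_le (fun x hx => ?_) (VK_nonneg K p)
  exact le_csSup (VK_bddAbove K p) ⟨⟨hx.1.1, lt_of_lt_of_le hx.1.2 hqp⟩, hx.2⟩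

/-- For every closed `K ⊆ [0,1]`, `𝒱(K) ∈ 𝒢`: it is increasing on
`[0,1]`, right-continuous at `0` and left-continuous on `(0,1]`. -/
theorem stmt_10 (K : Set ℝ) (hKc : IsClosed K) (hK : K ⊆ Icc 0 1) :
    MemG (VK K) := by
  have hVK0 : VK K 0 = 0 := by
    simp [VK, Ioo_self, Real.sSup_empty]
  refine ⟨(VK_mono K).monotoneOn _, ?_, ?_⟩
  · rw [hVK0]
    have h1 : Tendsto (fun p : ℝ => p) (nhdsWithin 0 (Ioi 0)) (nhds 0) :=
      tendsto_id.mono_left nhdsWithin_le_nhds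
    refine tendsto_of_tendsto_of_tendsto_of_le_of_le' tendsto_const_nhds h1 ?_ ?_
    · exact Eventually.of_forall fun p => VK_nonneg K p
    · filter_upwards [self_mem_nhdsWithin] with p hp
      exact VK_le K (le_of_lt hp)
  · intro p hp
    rw [tendsto_order]
    constructor
    · intro a ha
      rcases lt_or_ge a 0 with ha0 | ha0
      · exact Eventually.of_forall fun q => lt_of_lt_of_le ha0 (VK_nonneg K q)
      · -- a < sSup, so there is an element x > a
        have hne : (Ioo (0:ℝ) p ∩ K).Nonempty := by
          by_contra h
          rw [Set.not_nonempty_iff_eq_empty] at h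
          have : VK K p = 0 := by simp [VK, h, Real.sSup_empty]
          rw [this] at ha
          exact absurd ha (not_lt.2 ha0)
        obtain ⟨x, hx, hax⟩ := exists_lt_of_lt_csSup hne ha
        have hxp : x < p := hx.1.2
        filter_upwards [Ioo_mem_nhdsLT_of_mem (⟨hxp, le_refl p⟩ : p ∈ Ioc x p)]
          with q hq
        refine lt_of_lt_of_le hax (le_csSup (VK_bddAbove K q) ?_)
        exact ⟨⟨hx.1.1, hq.1⟩, hx.2⟩
    · intro a ha
      filter_upwards [self_mem_nhdsWithin] with q hq
      exact lt_of_le_of_lt (VK_mono K (le_of_lt hq)) ha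
end

section
/- For every closed subset K of [0,1], PSI(𝒱(K)) ∩ (0,1) = K ∩ (0,1). -/
open MeasureTheory Filter Set

/-- For every closed `K ⊆ [0,1]`, `PSI(𝒱(K)) ∩ (0,1) = K ∩ (0,1)`. -/
theorem stmt_11 (K : Set ℝ) (hKc : IsClosed K) (hK : K ⊆ Icc 0 1) :
    PSI (VK K) ∩ Ioo 0 1 = K ∩ Ioo 0 1 := by
  have hbdd : ∀ s : ℝ, BddAbove (Ioo 0 s ∩ K) := fun s =>
    bddAbove_Ioo.mono inter_subset_left
  have hle : ∀ s : ℝ, 0 ≤ s → VK K s ≤ s := fun s hs =>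
    Real.sSup_le (fun x hx => le_of_lt hx.1.2) hs
  ext p
  simp only [mem_inter_iff, mem_Ioo, PSI, mem_setOf_eq]
  constructor
  · rintro ⟨hpsi, hp0, hp1⟩
    refine ⟨?_, hp0, hp1⟩
    by_contra hpK
    obtain ⟨ε, hε, hball⟩ := Metric.isOpen_iff.1 hKc.isOpen_compl p hpK
    set δ := min (ε/2) (min (p/2) ((1-p)/2)) with hδdef
    have hδpos : 0 < δ := lt_min (by linarith) (lt_min (by linarith) (by linarith))
    have hδ1 : δ ≤ ε/2 := min_le_left _ _
    have hδ2 : δ ≤ p/2 := (min_le_right _ _).trans (min_le_left _ _)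
    have hδ3 : δ ≤ (1-p)/2 := (min_le_right _ _).trans (min_le_right _ _)
    have hconst : ∀ s ∈ Icc (p - δ) (p + δ), VK K s = VK K (p - δ) := by
      intro s hs
      have hset : Ioo 0 s ∩ K = Ioo 0 (p - δ) ∩ K := by
        ext x
        constructor
        · rintro ⟨⟨hx0, hxs⟩, hxK⟩
          refine ⟨⟨hx0, ?_⟩, hxK⟩
          by_contra hx
          push_neg at hx
          have hmem : x ∈ Metric.ball p ε := by
            rw [Metric.mem_ball, Real.dist_eq, abs_lt]
            constructor
            · linarith [hs.1, hs.2]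
            · linarith [hs.1, hs.2]
          exact (hball hmem) hxK
        · rintro ⟨⟨hx0, hxs⟩, hxK⟩
          exact ⟨⟨hx0, lt_of_lt_of_le hxs hs.1⟩, hxK⟩
      unfold VK
      rw [hset]
    rcases hpsi with ⟨_, hpsir⟩ | ⟨_, hpsil⟩
    · have h1 := hpsir (p + δ) ⟨by linarith, by linarith⟩
      have h2 := hconst p ⟨by linarith, by linarith⟩
      have h3 := hconst (p + δ) ⟨by linarith, le_refl _⟩
      rw [h2, h3] at h1
      exact lt_irrefl _ h1
    · have h1 := hpsil (p - δ) ⟨by linarith, by linarith⟩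
      have h2 := hconst p ⟨by linarith, by linarith⟩
      have h3 := hconst (p - δ) ⟨le_refl _, by linarith⟩
      rw [h2, h3] at h1
      exact lt_irrefl _ h1
  · rintro ⟨hpK, hp0, hp1⟩
    refine ⟨?_, hp0, hp1⟩
    rcases lt_or_eq_of_le (hle p hp0.le) with hlt | heq
    · left
      refine ⟨⟨hp0.le, hp1⟩, fun s hs => ?_⟩
      have : p ≤ VK K s := le_csSup (hbdd s) ⟨⟨hp0, hs.1⟩, hpK⟩
      linarith
    · right
      refine ⟨⟨hp0, hp1.le⟩, fun s hs => ?_⟩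
      have := hle s hs.1
      linarith [hs.2]
end

section
/- For every g ∈ 𝒢, 𝒱(PSI(g)) ≾ g and g ≾ 𝒱(PSI(g)). -/
open MeasureTheory Filter Set

namespace Stmt12Aux

/-- The level set of `g` at value `g p`, within `[0,1]`. -/
def L (g : ℝ → ℝ) (p : ℝ) : Set ℝ := {s | s ∈ Icc (0:ℝ) 1 ∧ g s = g p}

noncomputable def aF (g : ℝ → ℝ) (p : ℝ) : ℝ := sInf (L g p)

variable {g : ℝ → ℝ} {p t : ℝ}

lemma L_bddBelow (g : ℝ → ℝ) (p : ℝ) : BddBelow (L g p) := ⟨0, fun s hs => hs.1.1⟩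
lemma L_bddAbove (g : ℝ → ℝ) (p : ℝ) : BddAbove (L g p) := ⟨1, fun s hs => hs.1.2⟩
lemma L_nonempty (hp : p ∈ Icc (0:ℝ) 1) : (L g p).Nonempty := ⟨p, hp, rfl⟩

lemma aF_le (hp : p ∈ Icc (0:ℝ) 1) : aF g p ≤ p := csInf_le (L_bddBelow g p) ⟨hp, rfl⟩

lemma aF_nonneg (hp : p ∈ Icc (0:ℝ) 1) : 0 ≤ aF g p :=
  le_csInf (L_nonempty hp) fun s hs => hs.1.1

lemma aF_mem_Icc (hp : p ∈ Icc (0:ℝ) 1) : aF g p ∈ Icc (0:ℝ) 1 :=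
  ⟨aF_nonneg hp, (aF_le hp).trans hp.2⟩

section Mono
variable (hm : MonotoneOn g (Icc (0:ℝ) 1))
include hm

lemma g_eq_of_between (hp : p ∈ Icc (0:ℝ) 1) {s : ℝ} (h1 : aF g p < s) (h2 : s ≤ p) :
    g s = g p := by
  obtain ⟨u, hu, hus⟩ := exists_lt_of_csInf_lt (L_nonempty hp) h1
  have hs : s ∈ Icc (0:ℝ) 1 := ⟨hu.1.1.trans hus.le, h2.trans hp.2⟩
  have h3 : g u ≤ g s := hm hu.1 hs hus.le
  have h4 : g s ≤ g p := hm hs hp h2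
  rw [hu.2] at h3
  linarith

lemma g_lt_of_lt_aF (hp : p ∈ Icc (0:ℝ) 1) {s : ℝ} (hs : s ∈ Icc (0:ℝ) 1)
    (h : s < aF g p) : g s < g p := by
  have h1 : g s ≤ g p := hm hs hp ((h.trans_le (aF_le hp)).le)
  rcases h1.lt_or_eq with h2 | h2
  · exact h2
  · exact absurd (csInf_le (L_bddBelow g p) ⟨hs, h2⟩) (not_le.mpr h)

lemma aF_mem_PSI (hp : p ∈ Icc (0:ℝ) 1) (h0 : 0 < aF g p) (hlt : aF g p < p) :
    aF g p ∈ PSI g := by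
  have ha : aF g p ∈ Icc (0:ℝ) 1 := aF_mem_Icc hp
  have hle : g (aF g p) ≤ g p := hm ha hp (aF_le hp)
  rcases hle.lt_or_eq with h | h
  · left
    refine ⟨⟨ha.1, hlt.trans_le hp.2⟩, fun s hs => ?_⟩
    rcases le_or_gt s p with h2 | h2
    · rw [g_eq_of_between hm hp hs.1 h2]; exact h
    · exact h.trans_le (hm hp ⟨hp.1.trans h2.le, hs.2⟩ h2.le)
  · right
    refine ⟨⟨h0, ha.2⟩, fun s hs => ?_⟩
    rw [h]; exact g_lt_of_lt_aF hm hp ⟨hs.1, hs.2.le.trans ha.2⟩ hs.2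

lemma not_mem_PSI_of_between (hp : p ∈ Icc (0:ℝ) 1) (h1 : aF g p < t) (h2 : t < p) :
    t ∉ PSI g := by
  have ht : g t = g p := g_eq_of_between hm hp h1 h2.le
  rintro (⟨_, hR⟩ | ⟨_, hL⟩)
  · have := hR p ⟨h2, hp.2⟩
    rw [ht] at this; exact lt_irrefl _ this
  · have h0 : 0 ≤ aF g p := aF_nonneg hp
    set s := (aF g p + t)/2 with hsdef
    have hs1 : aF g p < s := by rw [hsdef]; linarith
    have hs2 : s < t := by rw [hsdef]; linarith
    have := hL s ⟨by linarith, hs2⟩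
    rw [g_eq_of_between hm hp hs1 (hs2.le.trans h2.le), ht] at this
    exact lt_irrefl _ this

end Mono

section MonoCont
variable (hm : MonotoneOn g (Icc (0:ℝ) 1))
  (hl : ∀ p ∈ Ioc (0:ℝ) 1, Tendsto g (nhdsWithin p (Iio p)) (nhds (g p)))
include hm hl

lemma g_eq_of_leftconst {x c : ℝ} (hx : x ∈ Ioc (0:ℝ) 1) (htx : t < x)
    (hconst : ∀ s ∈ Ioo t x, g s = c) : g x = c := by
  have h1 : Tendsto g (nhdsWithin x (Iio x)) (nhds c) := by
    refine Tendsto.congr' ?_ tendsto_const_nhds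
    filter_upwards [Ioo_mem_nhdsLT htx] with s hs
    exact (hconst s hs).symm
  exact tendsto_nhds_unique (hl x hx) h1

/-- In the case `aF g p = p`, there are PSI points arbitrarily close below `p`. -/
lemma exists_psi_near (hp : p ∈ Icc (0:ℝ) 1) (hap : aF g p = p) (ht : t ∈ Ioo (0:ℝ) p) :
    ∃ x ∈ Ioo (0:ℝ) p ∩ PSI g, t ≤ x := by
  have htI : t ∈ Icc (0:ℝ) 1 := ⟨ht.1.le, ht.2.le.trans hp.2⟩
  have hgt : g t < g p := g_lt_of_lt_aF hm hp htI (by rw [hap]; exact ht.2)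
  set b := sSup (L g t) with hbdef
  have htb : t ≤ b := le_csSup (L_bddAbove g t) ⟨htI, rfl⟩
  have hbp : b ≤ p := by
    refine csSup_le (L_nonempty htI) fun u hu => ?_
    by_contra hc
    push_neg at hc
    have := hm hp hu.1 hc.le
    rw [hu.2] at this
    linarith
  have hbI : b ∈ Icc (0:ℝ) 1 := ⟨htI.1.trans htb, hbp.trans hp.2⟩
  have hgb : g b = g t := by
    rcases eq_or_lt_of_le htb with h | h
    · rw [← h]
    · refine g_eq_of_leftconst hm hl ⟨ht.1.trans h, hbI.2⟩ h fun s hs => ?_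
      have hsI : s ∈ Icc (0:ℝ) 1 := ⟨htI.1.trans hs.1.le, hs.2.le.trans hbI.2⟩
      have h1 : g t ≤ g s := hm htI hsI hs.1.le
      obtain ⟨u, hu, hsu⟩ := exists_lt_of_lt_csSup (L_nonempty htI) hs.2
      have h2 : g s ≤ g u := hm hsI hu.1 hsu.le
      rw [hu.2] at h2
      linarith
  have hbp' : b < p := by
    rcases eq_or_lt_of_le hbp with h | h
    · rw [h] at hgb; linarith
    · exact h
  refine ⟨b, ⟨⟨ht.1.trans_le htb, hbp'⟩, Or.inl ⟨⟨hbI.1, hbp'.trans_le hp.2⟩, fun s hs => ?_⟩⟩, htb⟩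
  have hsI : s ∈ Icc (0:ℝ) 1 := ⟨hbI.1.trans hs.1.le, hs.2⟩
  have h1 : g t ≤ g s := hm htI hsI (htb.trans hs.1.le)
  rw [hgb]
  rcases h1.lt_or_eq with h2 | h2
  · exact h2
  · exact absurd (le_csSup (L_bddAbove g t) ⟨hsI, h2.symm⟩) (not_le.mpr hs.1)

/-- Main structural identity: `VK (PSI g) = aF g` on `[0,1]`. -/
lemma VK_eq_aF (hp : p ∈ Icc (0:ℝ) 1) : VK (PSI g) p = aF g p := by
  rcases eq_or_lt_of_le (aF_le hp) with hap | hap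
  · -- aF g p = p
    rcases eq_or_lt_of_le hp.1 with hp0 | hp0
    · rw [hap, ← hp0, VK]
      simp [Real.sSup_empty]
    · have hub : ∀ x ∈ Ioo (0:ℝ) p ∩ PSI g, x ≤ p := fun x hx => hx.1.2.le
      obtain ⟨x₀, hx₀, _⟩ := exists_psi_near hm hl hp hap ⟨half_pos hp0, half_lt_self hp0⟩
      have hle : sSup (Ioo (0:ℝ) p ∩ PSI g) ≤ p := csSup_le ⟨x₀, hx₀⟩ hub
      have hge : p ≤ sSup (Ioo (0:ℝ) p ∩ PSI g) := by
        refine le_of_forall_lt fun c hc => ?_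
        set u := max ((c + p)/2) (p/2) with hudef
        have hu1 : u < p := max_lt (by linarith) (half_lt_self hp0)
        have hu2 : 0 < u := lt_of_lt_of_le (half_pos hp0) (le_max_right _ _)
        have hu3 : c < u := lt_of_lt_of_le (by linarith) (le_max_left _ _)
        obtain ⟨x, hx, hux⟩ := exists_psi_near hm hl hp hap ⟨hu2, hu1⟩
        exact lt_of_lt_of_le (hu3.trans_le hux) (le_csSup ⟨p, hub⟩ hx)
      rw [hap]
      exact le_antisymm hle hge
  · -- aF g p < p
    rcases eq_or_lt_of_le (aF_nonneg hp) with h0 | h0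
    · have hE : Ioo (0:ℝ) p ∩ PSI g = ∅ := by
        ext x
        simp only [mem_inter_iff, mem_Ioo, mem_empty_iff_false, iff_false, not_and]
        rintro ⟨hx1, hx2⟩
        exact fun hx => not_mem_PSI_of_between hm hp (h0 ▸ hx1) hx2 hx
      rw [VK, hE, Real.sSup_empty, h0]
    · have hmem : aF g p ∈ Ioo (0:ℝ) p ∩ PSI g := ⟨⟨h0, hap⟩, aF_mem_PSI hm hp h0 hap⟩
      have hub : ∀ x ∈ Ioo (0:ℝ) p ∩ PSI g, x ≤ aF g p := by
        intro x hx
        by_contra hc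
        push_neg at hc
        exact not_mem_PSI_of_between hm hp hc hx.1.2 hx.2
      exact le_antisymm (csSup_le ⟨_, hmem⟩ hub) (le_csSup ⟨aF g p, hub⟩ hmem)

end MonoCont

end Stmt12Aux

namespace Stmt12Aux

variable {g : ℝ → ℝ} {p q : ℝ}

/-- The monotone map for direction `VK (PSI g) ≾ g`. -/
noncomputable def hFun (g : ℝ → ℝ) (y : ℝ) : ℝ :=
  sInf ({1} ∪ {s | s ∈ Icc (0:ℝ) 1 ∧ y ≤ g s})

lemma hFun_bddBelow (y : ℝ) : BddBelow ({1} ∪ {s | s ∈ Icc (0:ℝ) 1 ∧ y ≤ g s}) := by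
  refine ⟨0, fun x hx => ?_⟩
  rcases hx with hx | hx
  · rw [hx]; norm_num
  · exact hx.1.1

lemma hFun_mono : Monotone (hFun g) := by
  intro y1 y2 h
  refine csInf_le_csInf (hFun_bddBelow y1) ⟨1, Or.inl rfl⟩ ?_
  rintro x (hx | hx)
  · exact Or.inl hx
  · exact Or.inr ⟨hx.1, h.trans hx.2⟩

lemma hFun_eq (hm : MonotoneOn g (Icc (0:ℝ) 1)) (hp : p ∈ Icc (0:ℝ) 1) :
    hFun g (g p) = aF g p := by
  refine le_antisymm ?_ ?_
  · rcases eq_or_lt_of_le (aF_le hp) with hap | hap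
    · rw [hap]
      exact csInf_le (hFun_bddBelow _) (Or.inr ⟨hp, le_refl _⟩)
    · refine le_of_forall_gt_imp_ge_of_dense fun c hc => ?_
      set s := min c p with hsdef
      have hs1 : aF g p < s := lt_min hc hap
      have hs2 : s ≤ p := min_le_right _ _
      have hsI : s ∈ Icc (0:ℝ) 1 := ⟨(aF_nonneg hp).trans hs1.le, hs2.trans hp.2⟩
      have : s ∈ {1} ∪ {s | s ∈ Icc (0:ℝ) 1 ∧ g p ≤ g s} :=
        Or.inr ⟨hsI, (g_eq_of_between hm hp hs1 hs2).ge⟩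
      exact (csInf_le (hFun_bddBelow _) this).trans (min_le_left _ _)
  · refine le_csInf ⟨1, Or.inl rfl⟩ ?_
    rintro x (hx | hx)
    · rw [hx]; exact (aF_le hp).trans hp.2
    · by_contra hc
      push_neg at hc
      exact absurd hx.2 (not_le.mpr (g_lt_of_lt_aF hm hp hx.1 hc))

/-- The monotone map for direction `g ≾ VK (PSI g)`. -/
noncomputable def hFun' (g : ℝ → ℝ) (x : ℝ) : ℝ :=
  sInf ({g 1} ∪ g '' (Ioc x 1 ∩ Icc (0:ℝ) 1))

lemma hFun'_bddBelow (hm : MonotoneOn g (Icc (0:ℝ) 1)) (x : ℝ) :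
    BddBelow ({g 1} ∪ g '' (Ioc x 1 ∩ Icc (0:ℝ) 1)) := by
  refine ⟨g 0, fun y hy => ?_⟩
  rcases hy with hy | ⟨s, hs, rfl⟩
  · rw [hy]; exact hm ⟨le_refl _, zero_le_one⟩ ⟨zero_le_one, le_refl _⟩ zero_le_one
  · exact hm ⟨le_refl _, zero_le_one⟩ hs.2 hs.2.1

lemma hFun'_mono (hm : MonotoneOn g (Icc (0:ℝ) 1)) : Monotone (hFun' g) := by
  intro x1 x2 h
  refine csInf_le_csInf (hFun'_bddBelow hm x1) ⟨g 1, Or.inl rfl⟩ ?_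
  rintro y (hy | ⟨s, hs, rfl⟩)
  · exact Or.inl hy
  · exact Or.inr ⟨s, ⟨⟨h.trans_lt hs.1.1, hs.1.2⟩, hs.2⟩, rfl⟩

lemma le_hFun'_aF (hm : MonotoneOn g (Icc (0:ℝ) 1)) (hp : p ∈ Icc (0:ℝ) 1) :
    g p ≤ hFun' g (aF g p) := by
  refine le_csInf ⟨g 1, Or.inl rfl⟩ ?_
  rintro y (hy | ⟨s, hs, rfl⟩)
  · rw [hy]; exact hm hp ⟨zero_le_one, le_refl _⟩ hp.2
  · rcases le_or_gt p s with h | h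
    · exact hm hp hs.2 h
    · exact (g_eq_of_between hm hp hs.1.1 h.le).ge

lemma hFun'_le_of_lt (hm : MonotoneOn g (Icc (0:ℝ) 1)) (hp : p ∈ Icc (0:ℝ) 1)
    (hq : q ∈ Icc (0:ℝ) 1) (hpq : p < q) : hFun' g p ≤ g q :=
  csInf_le (hFun'_bddBelow hm p) (Or.inr ⟨q, ⟨⟨hpq, hq.2⟩, hq⟩, rfl⟩)

/-- The bad set: points of `[0,1]` where `g` jumps on the right. -/
def Bad (g : ℝ → ℝ) : Set ℝ := {p | p ∈ Icc (0:ℝ) 1 ∧ g p < hFun' g p}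

lemma Bad_countable (hm : MonotoneOn g (Icc (0:ℝ) 1)) : (Bad g).Countable := by
  have hch : ∀ p : ℝ, ∃ r : ℚ, p ∈ Bad g → g p < (r : ℝ) ∧ (r : ℝ) < hFun' g p := by
    intro p
    by_cases hp : p ∈ Bad g
    · obtain ⟨r, h1, h2⟩ := exists_rat_btwn hp.2
      exact ⟨r, fun _ => ⟨h1, h2⟩⟩
    · exact ⟨0, fun h => absurd h hp⟩
  choose f hf using hch
  refine Set.countable_of_injective_of_countable_image (f := f) ?_ (Set.to_countable _)
  intro x hx y hy hxy
  by_contra hne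
  rcases Ne.lt_or_gt hne with h | h
  · have h1 : (f x : ℝ) < hFun' g x := (hf x hx).2
    have h2 : hFun' g x ≤ g y := hFun'_le_of_lt hm hx.1 hy.1 h
    have h3 : g y < (f y : ℝ) := (hf y hy).1
    rw [hxy] at h1; linarith
  · have h1 : (f y : ℝ) < hFun' g y := (hf y hy).2
    have h2 : hFun' g y ≤ g x := hFun'_le_of_lt hm hy.1 hx.1 h
    have h3 : g x < (f x : ℝ) := (hf x hx).1
    rw [hxy] at h3; linarith

lemma hFun'_eq (hm : MonotoneOn g (Icc (0:ℝ) 1)) (hp : p ∈ Icc (0:ℝ) 1)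
    (hb : p ∉ Bad g) : hFun' g (aF g p) = g p := by
  refine le_antisymm ?_ (le_hFun'_aF hm hp)
  rcases eq_or_lt_of_le (aF_le hp) with hap | hap
  · rw [hap]
    by_contra hc
    push_neg at hc
    exact hb ⟨hp, hc⟩
  · exact csInf_le (hFun'_bddBelow hm _) (Or.inr ⟨p, ⟨⟨hap, hp.2⟩, hp⟩, rfl⟩)

end Stmt12Aux

/-- For every `g ∈ 𝒢`, `𝒱(PSI(g)) ≾ g` and `g ≾ 𝒱(PSI(g))`. -/
theorem stmt_12 (g : ℝ → ℝ) (hg : MemG g) :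
    Prec (VK (PSI g)) g ∧ Prec g (VK (PSI g)) := by
  obtain ⟨hm, -, hl⟩ := hg
  constructor
  · refine ⟨Stmt12Aux.hFun g, Stmt12Aux.hFun_mono, ?_⟩
    refine (ae_restrict_iff' measurableSet_Icc).mpr (ae_of_all _ fun p hp => ?_)
    rw [Stmt12Aux.VK_eq_aF hm hl hp, Stmt12Aux.hFun_eq hm hp]
  · refine ⟨Stmt12Aux.hFun' g, Stmt12Aux.hFun'_mono hm, ?_⟩
    refine (ae_restrict_iff' measurableSet_Icc).mpr ?_
    have h0 : volume (Stmt12Aux.Bad g) = 0 :=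
      (Stmt12Aux.Bad_countable hm).measure_zero _
    rw [MeasureTheory.ae_iff]
    refine measure_mono_null (fun p hp => ?_) h0
    simp only [mem_setOf_eq] at hp
    push_neg at hp
    obtain ⟨hpI, hne⟩ := hp
    by_contra hb
    exact hne (by rw [Stmt12Aux.VK_eq_aF hm hl hpI, Stmt12Aux.hFun'_eq hm hpI hb])
end

section
/- Let K be a closed subset of [0,1] with 0 ∈ K, and let {A_q}_{q∈K} be events with A_0 = Ω, ℙ(A_q) = 1 − q for each q ∈ K, and A_q ⊆ A_p whenever p, q ∈ K with p < q. Define Z(ω) = sup{q ∈ K : ω ∈ A_q}. Then: (a) ℙ(Z < q) ≤ q ≤ ℙ(Z ≤ q) for every q ∈ K; (b) if q ∈ K and (q−ε, q) ∩ K = ∅ for some ε > 0, then ℙ(Z < q) = q; (c) if p ∈ (0,1] satisfies (p−ε, p) ∩ K = ∅ for some ε > 0 and r = sup(({0} ∪ ((0,p) ∩ K))), then ℙ(Z ≤ r) ≥ p and ℙ(Z < r) < p. -/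
open MeasureTheory Filter Set

/-
Every bound comes from comparing the level sets of `Z` with the events `A_q`, whose
complements have probability `q`. If `ω ∈ A_q` then `q ≤ Z ω`; if `ω ∉ A_q` then, by
nestedness, only levels `x < q` contribute to the supremum, so `Z ω ≤ s` as soon as `K` has no
point in `(s, q)`. For (c), `r` is the largest point of `K` below `p` (it lies in `K` because
the gap makes `[0, p) ∩ K` closed), and the first point `q' ≥ p` of `K`, if any, has no point
of `K` in `(r, q')`, so `ℙ(Z ≤ r) ≥ ℙ(A_{q'}ᶜ) = q' ≥ p`.
-/

open ENNReal

noncomputable def levelSup {Ω : Type*} (K : Set ℝ) (A : ℝ → Set Ω) (ω : Ω) : ℝ :=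
  sSup {q | q ∈ K ∧ ω ∈ A q}

section LevelSup

variable {Ω : Type*} {K : Set ℝ} {A : ℝ → Set Ω} {q s : ℝ}

lemma le_levelSup (hK : BddAbove K) (hq : q ∈ K) {ω : Ω} (hω : ω ∈ A q) :
    q ≤ levelSup K A ω :=
  le_csSup (hK.mono fun _ hx => hx.1) ⟨hq, hω⟩

lemma setOf_levelSup_lt_subset_compl (hK : BddAbove K) (hq : q ∈ K) :
    {ω | levelSup K A ω < q} ⊆ (A q)ᶜ :=
  fun _ hlt hω => (le_levelSup hK hq hω).not_gt hlt

lemma compl_subset_setOf_levelSup_le_of_gap (hcover : ∀ ω, ∃ x ∈ K, ω ∈ A x)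
    (hA : AntitoneOn A K) (hq : q ∈ K) (hgap : Ioo s q ∩ K = ∅) :
    (A q)ᶜ ⊆ {ω | levelSup K A ω ≤ s} := by
  intro ω hω
  obtain ⟨x₀, hx₀⟩ := hcover ω
  refine csSup_le ⟨x₀, hx₀⟩ fun x ⟨hxK, hωx⟩ => ?_
  have hxq : x < q := lt_of_not_ge fun hqx => hω (hA hq hxK hqx hωx)
  by_contra hsx
  exact (eq_empty_iff_forall_notMem.1 hgap) x ⟨⟨lt_of_not_ge hsx, hxq⟩, hxK⟩

lemma Iio_inter_eq_Iic_inter_of_gap {ε : ℝ} (hε : 0 < ε) (hgap : Ioo (q - ε) q ∩ K = ∅) :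
    Iio q ∩ K = Iic (q - ε) ∩ K := by
  ext x
  refine ⟨fun ⟨hxq, hxK⟩ => ⟨mem_Iic.2 (not_lt.1 fun hx => ?_), hxK⟩,
    fun ⟨hx, hxK⟩ => ⟨mem_Iio.2 (by linarith [mem_Iic.1 hx]), hxK⟩⟩
  exact (eq_empty_iff_forall_notMem.1 hgap) x ⟨⟨hx, hxq⟩, hxK⟩

lemma IsClosed.csSup_Iio_inter_mem_of_gap (hKc : IsClosed K) {ε : ℝ} (hε : 0 < ε)
    (hgap : Ioo (q - ε) q ∩ K = ∅) (hne : (Iio q ∩ K).Nonempty) :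
    sSup (Iio q ∩ K) ∈ Iio q ∩ K := by
  have hclosed : IsClosed (Iio q ∩ K) := by
    rw [Iio_inter_eq_Iic_inter_of_gap hε hgap]
    exact isClosed_Iic.inter hKc
  exact hclosed.csSup_mem hne ⟨q, fun x hx => hx.1.le⟩

lemma singleton_union_Ioo_inter_eq_Iio_inter (hK : K ⊆ Ici 0) (h0K : 0 ∈ K) (hq : 0 < q) :
    {0} ∪ (Ioo 0 q ∩ K) = Iio q ∩ K := by
  ext x
  constructor
  · rintro (rfl | ⟨hx, hxK⟩)
    exacts [⟨hq, h0K⟩, ⟨hx.2, hxK⟩]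
  · rintro ⟨hxq, hxK⟩
    exact (mem_Ici.1 (hK hxK)).eq_or_lt.elim (fun h => Or.inl h.symm)
      fun h => Or.inr ⟨⟨h, hxq⟩, hxK⟩

end LevelSup

lemma prob_compl_eq_ofReal {Ω : Type*} [MeasurableSpace Ω] {P : Measure Ω}
    [IsProbabilityMeasure P] {E : Set Ω} {q : ℝ} (hE : MeasurableSet E) (hq : q ≤ 1)
    (h : P E = ENNReal.ofReal (1 - q)) : P Eᶜ = ENNReal.ofReal q := by
  rw [prob_compl_eq_one_sub hE, h, ← ofReal_one, ← ofReal_sub _ (by linarith)]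
  ring_nf

section Probability

variable {Ω : Type*} [MeasurableSpace Ω] {P : Measure Ω} [IsProbabilityMeasure P]
  {K : Set ℝ} {A : ℝ → Set Ω} {q s : ℝ}

lemma measure_setOf_levelSup_lt_le (hK : K ⊆ Icc 0 1)
    (hAmeas : ∀ x ∈ K, MeasurableSet (A x))
    (hAP : ∀ x ∈ K, P (A x) = ENNReal.ofReal (1 - x)) (hq : q ∈ K) :
    P {ω | levelSup K A ω < q} ≤ ENNReal.ofReal q :=
  calc P {ω | levelSup K A ω < q}
      ≤ P (A q)ᶜ := measure_mono (setOf_levelSup_lt_subset_compl ⟨1, fun _ hx => (hK hx).2⟩ hq)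
    _ = ENNReal.ofReal q := prob_compl_eq_ofReal (hAmeas q hq) (hK hq).2 (hAP q hq)

lemma ofReal_le_measure_setOf_levelSup_le_of_gap (hK : K ⊆ Icc 0 1)
    (hcover : ∀ ω, ∃ x ∈ K, ω ∈ A x) (hA : AntitoneOn A K)
    (hAmeas : ∀ x ∈ K, MeasurableSet (A x))
    (hAP : ∀ x ∈ K, P (A x) = ENNReal.ofReal (1 - x)) (hq : q ∈ K)
    (hgap : Ioo s q ∩ K = ∅) :
    ENNReal.ofReal q ≤ P {ω | levelSup K A ω ≤ s} :=
  calc ENNReal.ofReal q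
      = P (A q)ᶜ := (prob_compl_eq_ofReal (hAmeas q hq) (hK hq).2 (hAP q hq)).symm
    _ ≤ P {ω | levelSup K A ω ≤ s} :=
      measure_mono (compl_subset_setOf_levelSup_le_of_gap hcover hA hq hgap)

lemma ofReal_le_measure_setOf_levelSup_le (hKc : IsClosed K) (hK : K ⊆ Icc 0 1)
    (hcover : ∀ ω, ∃ x ∈ K, ω ∈ A x) (hA : AntitoneOn A K)
    (hAmeas : ∀ x ∈ K, MeasurableSet (A x))
    (hAP : ∀ x ∈ K, P (A x) = ENNReal.ofReal (1 - x)) {p : ℝ} (hp : p ≤ 1)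
    (hs : ∀ x ∈ K, x < p → x ≤ s) :
    ENNReal.ofReal p ≤ P {ω | levelSup K A ω ≤ s} := by
  by_cases hKp : (K ∩ Ici p).Nonempty
  · have hbdd : BddBelow (K ∩ Ici p) := ⟨0, fun x hx => (hK hx.1).1⟩
    obtain ⟨hq'K, hpq'⟩ := (hKc.inter isClosed_Ici).csInf_mem hKp hbdd
    have hgap : Ioo s (sInf (K ∩ Ici p)) ∩ K = ∅ := by
      refine eq_empty_iff_forall_notMem.2 fun x ⟨⟨hsx, hxq'⟩, hxK⟩ => ?_
      rcases lt_or_ge x p with hxp | hpx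
      · exact (hs x hxK hxp).not_gt hsx
      · exact (csInf_le hbdd ⟨hxK, hpx⟩).not_gt hxq'
    exact (ofReal_le_ofReal hpq').trans
      (ofReal_le_measure_setOf_levelSup_le_of_gap hK hcover hA hAmeas hAP hq'K hgap)
  · have hall : {ω | levelSup K A ω ≤ s} = univ := by
      refine eq_univ_of_forall fun ω => ?_
      obtain ⟨x₀, hx₀⟩ := hcover ω
      exact csSup_le ⟨x₀, hx₀⟩ fun x hx => hs x hx.1 (not_le.1 fun hpx => hKp ⟨x, hx.1, hpx⟩)
    rw [hall, measure_univ]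
    exact ofReal_le_one.2 hp

end Probability

theorem stmt_13_general {Ω : Type*} [MeasurableSpace Ω] (P : MeasureTheory.Measure Ω)
    [MeasureTheory.IsProbabilityMeasure P]
    (K : Set ℝ) (hKc : IsClosed K) (hK : K ⊆ Icc 0 1) (h0K : (0:ℝ) ∈ K)
    (A : ℝ → Set Ω) (hA0 : A 0 = Set.univ)
    (hAmeas : ∀ q ∈ K, MeasurableSet (A q))
    (hAP : ∀ q ∈ K, P (A q) = ENNReal.ofReal (1 - q))
    (hnested : ∀ p ∈ K, ∀ q ∈ K, p < q → A q ⊆ A p)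
    (Z : Ω → ℝ) (hZ : ∀ ω, Z ω = sSup {q | q ∈ K ∧ ω ∈ A q}) :
    (∀ q ∈ K,
      P {ω | Z ω < q} ≤ ENNReal.ofReal q ∧ ENNReal.ofReal q ≤ P {ω | Z ω ≤ q}) ∧
    (∀ q ∈ K, ∀ ε > 0, Ioo (q - ε) q ∩ K = ∅ →
      P {ω | Z ω < q} = ENNReal.ofReal q) ∧
    (∀ p ∈ Ioc (0:ℝ) 1, ∀ ε > 0, Ioo (p - ε) p ∩ K = ∅ →
      ∀ r : ℝ, r = sSup ({0} ∪ (Ioo 0 p ∩ K)) →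
        ENNReal.ofReal p ≤ P {ω | Z ω ≤ r} ∧ P {ω | Z ω < r} < ENNReal.ofReal p) := by
  obtain rfl : Z = levelSup K A := funext hZ
  have hcover : ∀ ω, ∃ x ∈ K, ω ∈ A x := fun ω => ⟨0, h0K, hA0 ▸ mem_univ ω⟩
  have hA : AntitoneOn A K := fun p hp q hq hpq =>
    hpq.eq_or_lt.elim (fun h => h ▸ subset_rfl) (hnested p hp q hq)
  have hlt : ∀ q ∈ K, P {ω | levelSup K A ω < q} ≤ ENNReal.ofReal q :=
    fun _ => measure_setOf_levelSup_lt_le hK hAmeas hAP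
  have hgap : ∀ q ∈ K, ∀ s, Ioo s q ∩ K = ∅ → ENNReal.ofReal q ≤ P {ω | levelSup K A ω ≤ s} :=
    fun _ hq _ => ofReal_le_measure_setOf_levelSup_le_of_gap hK hcover hA hAmeas hAP hq
  refine ⟨fun q hq => ⟨hlt q hq, hgap q hq q (by simp)⟩, fun q hq ε hε hKε => ?_, ?_⟩
  · exact (hlt q hq).antisymm ((hgap q hq _ hKε).trans
      (measure_mono (ofPred_subset_ofPred.2 fun _ h => by linarith)))
  · intro p hp ε hε hKε r hr
    rw [singleton_union_Ioo_inter_eq_Iio_inter (fun x hx => (hK hx).1) h0K hp.1] at hr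
    obtain ⟨hrp, hrK⟩ : r ∈ Iio p ∩ K :=
      hr ▸ hKc.csSup_Iio_inter_mem_of_gap hε hKε ⟨0, hp.1, h0K⟩
    exact ⟨ofReal_le_measure_setOf_levelSup_le hKc hK hcover hA hAmeas hAP hp.2
        fun x hxK hxp => hr ▸ le_csSup ⟨p, fun y hy => hy.1.le⟩ ⟨hxp, hxK⟩,
      (hlt r hrK).trans_lt ((ofReal_lt_ofReal_iff hp.1).2 hrp)⟩

/-- Properties of `Z(ω) = sup {q ∈ K : ω ∈ A_q}` for a nested family of
events `{A_q}_{q ∈ K}` with `A_0 = Ω` and `ℙ(A_q) = 1 - q`. -/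
theorem stmt_13 {Ω : Type*} [MeasurableSpace Ω] (P : MeasureTheory.Measure Ω)
    [MeasureTheory.IsProbabilityMeasure P] (hP : Atomless P)
    (K : Set ℝ) (hKc : IsClosed K) (hK : K ⊆ Icc 0 1) (h0K : (0:ℝ) ∈ K)
    (A : ℝ → Set Ω) (hA0 : A 0 = Set.univ)
    (hAmeas : ∀ q ∈ K, MeasurableSet (A q))
    (hAP : ∀ q ∈ K, P (A q) = ENNReal.ofReal (1 - q))
    (hnested : ∀ p ∈ K, ∀ q ∈ K, p < q → A q ⊆ A p)
    (Z : Ω → ℝ) (hZ : ∀ ω, Z ω = sSup {q | q ∈ K ∧ ω ∈ A q}) :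
    (∀ q ∈ K,
      P {ω | Z ω < q} ≤ ENNReal.ofReal q ∧ ENNReal.ofReal q ≤ P {ω | Z ω ≤ q}) ∧
    (∀ q ∈ K, ∀ ε > 0, Ioo (q - ε) q ∩ K = ∅ →
      P {ω | Z ω < q} = ENNReal.ofReal q) ∧
    (∀ p ∈ Ioc (0:ℝ) 1, ∀ ε > 0, Ioo (p - ε) p ∩ K = ∅ →
      ∀ r : ℝ, r = sSup ({0} ∪ (Ioo 0 p ∩ K)) →
        ENNReal.ofReal p ≤ P {ω | Z ω ≤ r} ∧ P {ω | Z ω < r} < ENNReal.ofReal p) :=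
  stmt_13_general P K hKc hK h0K A hA0 hAmeas hAP hnested Z hZ
end

section
/- Let g ∈ 𝒢. A random vector (X₁,…,X_d) of real random variables on Ω is g-comonotonic if and only if it is PSI(g)-concentrated. -/
open MeasureTheory Filter Set

open Topology ProbabilityTheory

/-!
Forward direction: if `Z` has quantile function `g` and is comonotonic with every `Xᵢ`, then at a
point `p` of strict increase of `g` the event `{Z > g p}` (if `p` is a PSIR) or `{Z ≥ g p}` (if `p`
is a PSIL) has probability `1 - p`, and comonotonicity turns it into a common tail event.

Backward direction: two common tail events `A`, `L` can be reconciled, since every `Xᵢ` at a point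
of `L \ A` lies between its values on `A` and on `Lᶜ`; with atomlessness this gives nested
common tail events `A_p` for a countable dense set of levels `p` in `PSI(g)`. The level function
`V ω = sup {p | ω ∈ A_p}` has `ℙ(V > x) = 1 - x` wherever this matters, so that `Z = g⁺ ∘ V`, with
`g⁺` the right-continuous version of `g`, has distribution function `t ↦ inf {u | t < g u}` and
hence quantile function `g`. It is comonotonic with every `Xᵢ` because `V` only separates points
lying on the two sides of some `A_p`.
-/

section CDF

variable {μ : Measure ℝ} {g : ℝ → ℝ} {p x : ℝ}

lemma bddBelow_setOf_le_cdf (hp : 0 < p) : BddBelow {y | p ≤ cdf μ y} := by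
  obtain ⟨x₀, hx₀⟩ := eventually_atBot.1 ((tendsto_cdf_atBot μ).eventually (gt_mem_nhds hp))
  exact ⟨x₀, fun y hy => not_lt.1 fun hlt => (hx₀ y hlt.le).not_ge hy⟩

lemma cdf_lt_of_lt_sInf (hp : 0 < p) (h : x < sInf {y | p ≤ cdf μ y}) : cdf μ x < p :=
  not_le.1 fun h' => h.not_ge (csInf_le (bddBelow_setOf_le_cdf hp) h')

lemma le_cdf_sInf (hp₀ : 0 < p) (hp₁ : p < 1) : p ≤ cdf μ (sInf {y | p ≤ cdf μ y}) := by
  have hne : {y | p ≤ cdf μ y}.Nonempty :=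
    ((tendsto_cdf_atTop μ).eventually (lt_mem_nhds hp₁)).exists.imp fun _ h => h.le
  refine ge_of_tendsto (((cdf μ).right_continuous _).mono Ioi_subset_Ici_self) ?_
  filter_upwards [self_mem_nhdsWithin] with y hy
  obtain ⟨z, hz, hzy⟩ := (csInf_lt_iff (bddBelow_setOf_le_cdf hp₀) hne).1 hy
  exact hz.trans ((cdf μ).mono hzy.le)

lemma cdf_eq_of_isPSIR (hQ : ∀ s ∈ Ioc (0:ℝ) 1, sInf {y | s ≤ cdf μ y} = g s)
    (hp : IsPSIR g p) : cdf μ (g p) = p := by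
  obtain ⟨⟨hp₀, hp₁⟩, hinc⟩ := hp
  refine le_antisymm (le_of_forall_gt fun s hs => ?_) ?_
  · rcases le_or_gt s 1 with hs₁ | hs₁
    · have hs₀ : 0 < s := hp₀.trans_lt hs
      exact cdf_lt_of_lt_sInf hs₀ ((hQ s ⟨hs₀, hs₁⟩).symm ▸ hinc s ⟨hs, hs₁⟩)
    · exact (cdf_le_one μ _).trans_lt hs₁
  · rcases hp₀.eq_or_lt with rfl | hp₀
    · exact cdf_nonneg μ _
    · exact hQ p ⟨hp₀, hp₁.le⟩ ▸ le_cdf_sInf hp₀ hp₁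

lemma leftLim_cdf_eq_of_isPSIL (hQ : ∀ s ∈ Ioc (0:ℝ) 1, sInf {y | s ≤ cdf μ y} = g s)
    (hp : IsPSIL g p) : Function.leftLim (cdf μ) (g p) = p := by
  obtain ⟨⟨hp₀, hp₁⟩, hinc⟩ := hp
  rw [(cdf μ).mono.leftLim_eq_sSup]
  refine IsLUB.csSup_eq ⟨?_, fun b hb => le_of_forall_lt fun c hc => ?_⟩ (nonempty_Iio.image _)
  · rintro _ ⟨y, hy, rfl⟩
    exact (cdf_lt_of_lt_sInf hp₀ ((hQ p ⟨hp₀, hp₁⟩).symm ▸ hy)).le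
  · obtain ⟨s, hcs, hsp⟩ := exists_between (max_lt hc hp₀)
    have hs₀ : 0 < s := (le_max_right _ _).trans_lt hcs
    have hgs : g s < g p := hinc s ⟨hs₀.le, hsp⟩
    refine (le_max_left _ _).trans_lt (hcs.trans_le (le_trans ?_ (hb ⟨g s, hgs, rfl⟩)))
    exact hQ s ⟨hs₀, hsp.le.trans hp₁⟩ ▸ le_cdf_sInf hs₀ (hsp.trans_le hp₁)

lemma exists_isUpperSet_measure_eq [IsProbabilityMeasure μ]
    (hQ : ∀ s ∈ Ioc (0:ℝ) 1, sInf {y | s ≤ cdf μ y} = g s) (hp : p ∈ PSI g) :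
    ∃ S : Set ℝ, IsUpperSet S ∧ MeasurableSet S ∧ μ S = ENNReal.ofReal (1 - p) := by
  rcases hp with hp | hp
  · refine ⟨Ioi (g p), isUpperSet_Ioi _, measurableSet_Ioi, ?_⟩
    have := (cdf μ).measure_Ioi (tendsto_cdf_atTop μ) (g p)
    rwa [measure_cdf, cdf_eq_of_isPSIR hQ hp] at this
  · refine ⟨Ici (g p), isUpperSet_Ici _, measurableSet_Ici, ?_⟩
    have := (cdf μ).measure_Ici (tendsto_cdf_atTop μ) (g p)
    rwa [measure_cdf, leftLim_cdf_eq_of_isPSIL hQ hp] at this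

end CDF

section Forward

variable {Ω : Type*} [MeasurableSpace Ω] {P : Measure Ω} [IsProbabilityMeasure P]

/-- With `A = Z ⁻¹' S`: between `X ω < X ω'` there is a rational `r`, and comonotonicity makes one
of the two events `A ∩ {X < r}`, `Aᶜ ∩ {X > r}` null. -/
lemma ComonotonePair.isTailEvent_preimage {X Z : Ω → ℝ} (hcom : ComonotonePair P X Z)
    (hZ : Measurable Z) {S : Set ℝ} (hS : IsUpperSet S) (hSm : MeasurableSet S) :
    IsTailEvent P X (Z ⁻¹' S) := by
  set A := Z ⁻¹' S
  have key : ∀ r : ℚ, ∃ N, P N = 0 ∧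
      (A ∩ {ω | X ω < r} ⊆ N ∨ Aᶜ ∩ {ω | (r : ℝ) < X ω} ⊆ N) := by
    intro r
    have hbad : (P.prod P) ((A ∩ {ω | X ω < r}) ×ˢ (Aᶜ ∩ {ω | (r : ℝ) < X ω})) = 0 := by
      refine measure_mono_null (fun w ⟨⟨hA, hr⟩, hA', hr'⟩ => ?_) (ae_iff.1 hcom)
      have hZ' : Z w.2 < Z w.1 := not_le.1 fun h => hA' (hS h hA)
      exact not_le.2 (mul_neg_of_neg_of_pos (by simp only [mem_ofPred_eq] at hr hr'; linarith)
        (sub_pos.2 hZ'))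
    rw [Measure.prod_prod, mul_eq_zero] at hbad
    exact hbad.elim (fun h => ⟨_, h, Or.inl subset_rfl⟩) fun h => ⟨_, h, Or.inr subset_rfl⟩
  choose N hN hsub using key
  refine ⟨hZ hSm, ⋃ r, N r, measure_iUnion_null hN,
    fun ω hω hωN ω' hω' hω'N => not_lt.1 fun hlt => ?_⟩
  obtain ⟨r, h₁, h₂⟩ := exists_rat_btwn hlt
  rcases hsub r with h | h
  · exact hωN (mem_iUnion_of_mem r (h ⟨hω, h₁⟩))
  · exact hω'N (mem_iUnion_of_mem r (h ⟨hω', h₂⟩))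

lemma leftQuantile_eq_sInf_cdf {Z : Ω → ℝ} (hZ : Measurable Z) (p : ℝ) :
    leftQuantile P Z p = sInf {y | p ≤ cdf (P.map Z) y} := by
  have : IsProbabilityMeasure (P.map Z) := Measure.isProbabilityMeasure_map hZ.aemeasurable
  have hcdf : ∀ x, P {ω | Z ω ≤ x} = ENNReal.ofReal (cdf (P.map Z) x) := fun x => by
    rw [ofReal_cdf, Measure.map_apply hZ measurableSet_Iic]
    rfl
  simp_rw [leftQuantile, hcdf, ENNReal.ofReal_le_ofReal_iff (cdf_nonneg _ _)]

theorem kConcentrated_of_gComonotone {g : ℝ → ℝ} {d : ℕ} {X : Fin d → Ω → ℝ}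
    (h : GComonotone P g X) : KConcentrated P X (PSI g) := by
  obtain ⟨Z, hZ, hQ, hcom⟩ := h
  have : IsProbabilityMeasure (P.map Z) := Measure.isProbabilityMeasure_map hZ.aemeasurable
  intro p hp
  obtain ⟨S, hS, hSm, hμS⟩ := exists_isUpperSet_measure_eq (μ := P.map Z) (fun s hs => by
    rw [← hQ s ⟨hs.1.le, hs.2⟩, Q, if_neg hs.1.ne', leftQuantile_eq_sInf_cdf hZ]) hp
  exact ⟨Z ⁻¹' S, fun i => ⟨(hcom i).isTailEvent_preimage hZ hS hSm,
    by rw [← Measure.map_apply hZ hSm, hμS]⟩⟩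

end Forward

namespace IsTailEvent

variable {Ω : Type*} [MeasurableSpace Ω] {P : Measure Ω} {X : Ω → ℝ} {A B L M U : Set Ω}

lemma of_ae_eq (hA : IsTailEvent P X A) (hB : MeasurableSet B) (hAB : A =ᵐ[P] B) :
    IsTailEvent P X B := by
  obtain ⟨N, hN, htail⟩ := hA.2
  rw [ae_eq_set] at hAB
  refine ⟨hB, N ∪ (A \ B) ∪ (B \ A), measure_union_null (measure_union_null hN hAB.1) hAB.2,
    fun ω hω hωN ω' hω' hω'N => ?_⟩
  simp only [mem_union, Set.mem_sdiff, not_or, not_and, not_not] at hωN hω'N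
  exact htail ω (hωN.2 hω) hωN.1.1 ω' (fun h => hω' (hω'N.1.2 h)) hω'N.1.1

lemma compl_neg (hA : IsTailEvent P X A) : IsTailEvent P (-X) Aᶜ := by
  obtain ⟨N, hN, htail⟩ := hA.2
  refine ⟨hA.1.compl, N, hN, fun ω hω hωN ω' hω' hω'N => ?_⟩
  simpa using htail ω' (not_notMem.mp hω') hω'N ω hω hωN

/-- If `L` sticks out of `A` on a non-null set, that part lies between `A` and the outside of `L`,
so anything between `L` and `A ∪ L` is a tail event; otherwise `L ∪ M` is `A` up to a null set. -/
lemma union_of_subset [IsFiniteMeasure P] (hA : IsTailEvent P X A) (hL : IsTailEvent P X L)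
    (hMA : M ⊆ A) (hM : MeasurableSet M) (hmeas : P A ≤ P (L ∪ M)) :
    IsTailEvent P X (L ∪ M) := by
  by_cases hLA : P (L \ A) = 0
  · refine hA.of_ae_eq (hL.1.union hM) (ae_eq_of_ae_subset_of_measure_ge ?_ hmeas
      (hL.1.union hM).nullMeasurableSet (measure_ne_top _ _)).symm
    have hsub : (L ∪ M) \ A ⊆ L \ A := fun ω h => ⟨h.1.resolve_right (fun h' => h.2 (hMA h')), h.2⟩
    exact ae_le_set.mpr (measure_mono_null hsub hLA)
  obtain ⟨NA, hNA, htailA⟩ := hA.2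
  obtain ⟨NL, hNL, htailL⟩ := hL.2
  obtain ⟨ω₀, ⟨hω₀L, hω₀A⟩, hω₀N⟩ : ((L \ A) \ (NA ∪ NL)).Nonempty :=
    nonempty_of_measure_ne_zero (by rwa [measure_sdiff_null (measure_union_null hNA hNL)])
  simp only [mem_union, not_or] at hω₀N
  refine ⟨hL.1.union hM, NA ∪ NL, measure_union_null hNA hNL, fun ω hω hωN ω' hω' hω'N => ?_⟩
  simp only [mem_union, not_or, mem_compl_iff] at hωN hω'N hω'
  rcases hω with hωL | hωM
  · exact htailL ω hωL hωN.2 ω' hω'.1 hω'N.2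
  by_cases hω'A : ω' ∈ A
  · exact (htailL ω₀ hω₀L hω₀N.2 ω' hω'.1 hω'N.2).trans
      (htailA ω (hMA hωM) hωN.1 ω₀ hω₀A hω₀N.1)
  · exact htailA ω (hMA hωM) hωN.1 ω' hω'A hω'N.1

lemma diff_of_subset [IsProbabilityMeasure P] (hB : IsTailEvent P X B) (hU : IsTailEvent P X U)
    (hMB : M ⊆ Bᶜ) (hM : MeasurableSet M) (hmeas : P (U \ M) ≤ P B) :
    IsTailEvent P X (U \ M) := by
  -- `union_of_subset` for the complements, which are tail events of `-X`
  have hdual : IsTailEvent P (-X) (Uᶜ ∪ M) := by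
    refine hB.compl_neg.union_of_subset hU.compl_neg hMB hM ?_
    rw [prob_compl_eq_one_sub hB.1, show Uᶜ ∪ M = (U \ M)ᶜ by ext; simp [imp_iff_not_or],
      prob_compl_eq_one_sub (hU.1.diff hM)]
    exact tsub_le_tsub_left hmeas 1
  simpa [show (Uᶜ ∪ M)ᶜ = U \ M by ext; simp] using hdual.compl_neg

end IsTailEvent

section CommonTail

variable {Ω ι : Type*} [MeasurableSpace Ω] {P : Measure Ω} {X : ι → Ω → ℝ}

/-- A tail event for every component of `X`; measurability is part of it since `ι` may be empty. -/
def IsCommonTailEvent (P : Measure Ω) (X : ι → Ω → ℝ) (A : Set Ω) : Prop :=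
  MeasurableSet A ∧ ∀ i, IsTailEvent P (X i) A

lemma isCommonTailEvent_univ : IsCommonTailEvent P X univ :=
  ⟨.univ, fun _ => ⟨.univ, ∅, measure_empty, fun _ _ _ _ h => absurd (mem_univ _) h⟩⟩

lemma isCommonTailEvent_empty : IsCommonTailEvent P X ∅ :=
  ⟨.empty, fun _ => ⟨.empty, ∅, measure_empty, fun _ h => absurd h (notMem_empty _)⟩⟩

variable [IsProbabilityMeasure P]

lemma exists_isCommonTailEvent_between (hP : Atomless P) {A L U : Set Ω}
    (hA : IsCommonTailEvent P X A) (hL : IsCommonTailEvent P X L) (hU : IsCommonTailEvent P X U)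
    (hLU : L ⊆ U) (hLA : P L ≤ P A) (hAU : P A ≤ P U) :
    ∃ B, IsCommonTailEvent P X B ∧ P B = P A ∧ L ⊆ B ∧ B ⊆ U := by
  -- grow `L` inside `A` to the mass of `A`, then cut `U` down to that mass outside the result
  obtain ⟨M, hMA, hM, hPM⟩ := hP (A \ L) (hA.1.diff hL.1) (P A - P L) (le_measure_sdiff)
  have hPLM : P (L ∪ M) = P A := by
    rw [measure_union (disjoint_left.mpr fun ω hL hM => (hMA hM).2 hL) hM, hPM,
      add_tsub_cancel_of_le hLA]
  set B₁ := L ∪ M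
  have hB₁ : IsCommonTailEvent P X B₁ := ⟨hL.1.union hM, fun i =>
    (hA.2 i).union_of_subset (hL.2 i) (hMA.trans sdiff_subset) hM hPLM.ge⟩
  obtain ⟨M', hM'U, hM', hPM'⟩ := hP (U \ B₁) (hU.1.diff hB₁.1) (P U - P B₁) le_measure_sdiff
  have hPUM : P (U \ M') = P A := by
    rw [measure_sdiff (hM'U.trans sdiff_subset) hM'.nullMeasurableSet (measure_ne_top _ _), hPM',
      ENNReal.sub_sub_cancel (measure_ne_top _ _) (hPLM ▸ hAU), hPLM]
  refine ⟨U \ M', ⟨hU.1.diff hM', fun i => (hB₁.2 i).diff_of_subset (hU.2 i)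
      (hM'U.trans fun ω h => h.2) hM' (hPUM.trans hPLM.symm).le⟩, hPUM,
    fun ω hω => ⟨hLU hω, fun h => (hM'U h).2 (Or.inl hω)⟩, sdiff_subset⟩

/-- The new event is squeezed between the smallest old event of lower level and the largest old
event of higher level. -/
lemma exists_isCommonTailEvent_nested (hP : Atomless P) {κ : Type*} (s : Finset κ) {e : κ → ℝ}
    {B : κ → Set Ω} (hB : ∀ m ∈ s, IsCommonTailEvent P X (B m) ∧ P (B m) = ENNReal.ofReal (1 - e m))
    (hnest : ∀ m ∈ s, ∀ m' ∈ s, e m ≤ e m' → B m' ⊆ B m) {p : ℝ} (hp : 0 ≤ p) {A : Set Ω}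
    (hA : IsCommonTailEvent P X A) (hPA : P A = ENNReal.ofReal (1 - p)) :
    ∃ C, IsCommonTailEvent P X C ∧ P C = ENNReal.ofReal (1 - p) ∧
      ∀ m ∈ s, (e m ≤ p → C ⊆ B m) ∧ (p ≤ e m → B m ⊆ C) := by
  classical
  obtain ⟨U, hU, hPU, hUB, hBU⟩ : ∃ U, IsCommonTailEvent P X U ∧ ENNReal.ofReal (1 - p) ≤ P U ∧
      (∀ m ∈ s, e m ≤ p → U ⊆ B m) ∧ (∀ m ∈ s, p ≤ e m → B m ⊆ U) := by
    rcases (s.filter (e · ≤ p)).eq_empty_or_nonempty with h | h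
    · refine ⟨univ, isCommonTailEvent_univ, by simp [hp], fun m hm hle => ?_,
        fun _ _ _ => subset_univ _⟩
      exact absurd (Finset.mem_filter.2 ⟨hm, hle⟩) (h ▸ Finset.notMem_empty m)
    · obtain ⟨m₀, hm₀, hmax⟩ := (s.filter (e · ≤ p)).exists_max_image e h
      rw [Finset.mem_filter] at hm₀
      refine ⟨B m₀, (hB m₀ hm₀.1).1, ?_, fun m hm hle => ?_, fun m hm hle => ?_⟩
      · rw [(hB m₀ hm₀.1).2]
        exact ENNReal.ofReal_le_ofReal (by linarith [hm₀.2])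
      · exact hnest m hm m₀ hm₀.1 (hmax m (Finset.mem_filter.2 ⟨hm, hle⟩))
      · exact hnest m₀ hm₀.1 m hm (hm₀.2.trans hle)
  obtain ⟨L, hL, hPL, hLU, hBL⟩ : ∃ L, IsCommonTailEvent P X L ∧ P L ≤ ENNReal.ofReal (1 - p) ∧
      L ⊆ U ∧ ∀ m ∈ s, p ≤ e m → B m ⊆ L := by
    rcases (s.filter (p ≤ e ·)).eq_empty_or_nonempty with h | h
    · refine ⟨∅, isCommonTailEvent_empty, by simp, empty_subset _, fun m hm hle => ?_⟩
      exact absurd (Finset.mem_filter.2 ⟨hm, hle⟩) (h ▸ Finset.notMem_empty m)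
    · obtain ⟨m₀, hm₀, hmin⟩ := (s.filter (p ≤ e ·)).exists_min_image e h
      rw [Finset.mem_filter] at hm₀
      refine ⟨B m₀, (hB m₀ hm₀.1).1, ?_, hBU m₀ hm₀.1 hm₀.2, fun m hm hle => ?_⟩
      · rw [(hB m₀ hm₀.1).2]
        exact ENNReal.ofReal_le_ofReal (by linarith [hm₀.2])
      · exact hnest m₀ hm₀.1 m hm (hmin m (Finset.mem_filter.2 ⟨hm, hle⟩))
  obtain ⟨C, hC, hPC, hLC, hCU⟩ :=
    exists_isCommonTailEvent_between hP hA hL hU hLU (hPA ▸ hPL) (hPA ▸ hPU)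
  exact ⟨C, hC, hPC.trans hPA,
    fun m hm => ⟨fun h => hCU.trans (hUB m hm h), fun h => (hBL m hm h).trans hLC⟩⟩

variable (P X) in
open Classical in
/-- By `nestedTailEvents_spec` the `else` branch is never taken. -/
noncomputable def nestedTailEvents (e : ℕ → ℝ) (n : ℕ) : Set Ω :=
  if h : ∃ C, IsCommonTailEvent P X C ∧ P C = ENNReal.ofReal (1 - e n) ∧
      ∀ m < n, (e m ≤ e n → C ⊆ nestedTailEvents e m) ∧ (e n ≤ e m → nestedTailEvents e m ⊆ C)
  then h.choose else ∅

lemma nestedTailEvents_spec (hP : Atomless P) {e : ℕ → ℝ} (he : ∀ n, 0 ≤ e n)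
    (hgood : ∀ n, ∃ A, IsCommonTailEvent P X A ∧ P A = ENNReal.ofReal (1 - e n)) (n : ℕ) :
    IsCommonTailEvent P X (nestedTailEvents P X e n) ∧
      P (nestedTailEvents P X e n) = ENNReal.ofReal (1 - e n) ∧
      ∀ m < n, (e m ≤ e n → nestedTailEvents P X e n ⊆ nestedTailEvents P X e m) ∧
        (e n ≤ e m → nestedTailEvents P X e m ⊆ nestedTailEvents P X e n) := by
  induction n using Nat.strong_induction_on with
  | _ n ih =>
  have hex : ∃ C, IsCommonTailEvent P X C ∧ P C = ENNReal.ofReal (1 - e n) ∧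
      ∀ m < n, (e m ≤ e n → C ⊆ nestedTailEvents P X e m) ∧
        (e n ≤ e m → nestedTailEvents P X e m ⊆ C) := by
    obtain ⟨A, hA, hPA⟩ := hgood n
    have hnest : ∀ m ∈ Finset.range n, ∀ m' ∈ Finset.range n, e m ≤ e m' →
        nestedTailEvents P X e m' ⊆ nestedTailEvents P X e m := by
      intro m hm m' hm' hle
      rcases lt_trichotomy m m' with h | rfl | h
      · exact ((ih m' (Finset.mem_range.1 hm')).2.2 m h).1 hle
      · exact subset_rfl
      · exact ((ih m (Finset.mem_range.1 hm)).2.2 m' h).2 hle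
    obtain ⟨C, hC, hPC, hCB⟩ := exists_isCommonTailEvent_nested hP (Finset.range n)
      (fun m hm => ⟨(ih m (Finset.mem_range.1 hm)).1, (ih m (Finset.mem_range.1 hm)).2.1⟩)
      hnest (he n) hA hPA
    exact ⟨C, hC, hPC, fun m hm => hCB m (Finset.mem_range.2 hm)⟩
  rw [nestedTailEvents, dif_pos hex]
  exact hex.choose_spec

end CommonTail

lemma ofReal_one_sub_le_of_forall_lt {a : ℝ} {S : ENNReal}
    (h : ∀ y, a < y → ENNReal.ofReal (1 - y) ≤ S) : ENNReal.ofReal (1 - a) ≤ S :=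
  le_of_tendsto (x := 𝓝[>] a) ((ENNReal.continuous_ofReal.comp (continuous_sub_left 1)).tendsto a
    |>.mono_left nhdsWithin_le_nhds) (eventually_nhdsWithin_of_forall fun y hy => h y hy)

lemma le_ofReal_one_sub_of_forall_lt {a : ℝ} {S : ENNReal}
    (h : ∀ y, y < a → S ≤ ENNReal.ofReal (1 - y)) : S ≤ ENNReal.ofReal (1 - a) :=
  ge_of_tendsto (x := 𝓝[<] a) ((ENNReal.continuous_ofReal.comp (continuous_sub_left 1)).tendsto a
    |>.mono_left nhdsWithin_le_nhds) (eventually_nhdsWithin_of_forall fun y hy => h y hy)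

section Levels

variable {Ω : Type*} [MeasurableSpace Ω] {P : Measure Ω} {e : ℕ → ℝ} {B : ℕ → Set Ω}

structure NestedLevels (P : Measure Ω) (e : ℕ → ℝ) (B : ℕ → Set Ω) : Prop where
  mem_Icc : ∀ n, e n ∈ Icc (0:ℝ) 1
  measurableSet : ∀ n, MeasurableSet (B n)
  measure_eq : ∀ n, P (B n) = ENNReal.ofReal (1 - e n)
  antitone : ∀ m n, e m ≤ e n → B n ⊆ B m

lemma exists_nestedLevels {ι : Type*} {X : ι → Ω → ℝ} [IsProbabilityMeasure P] (hP : Atomless P)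
    (he : ∀ n, e n ∈ Icc (0:ℝ) 1)
    (hgood : ∀ n, ∃ A, IsCommonTailEvent P X A ∧ P A = ENNReal.ofReal (1 - e n)) :
    ∃ B, NestedLevels P e B ∧ ∀ n, IsCommonTailEvent P X (B n) := by
  have hspec := nestedTailEvents_spec hP (fun n => (he n).1) hgood
  refine ⟨nestedTailEvents P X e, ⟨he, fun n => (hspec n).1.1, fun n => (hspec n).2.1,
    fun m n hle => ?_⟩, fun n => (hspec n).1⟩
  rcases lt_trichotomy m n with h | rfl | h
  · exact ((hspec n).2.2 m h).1 hle
  · exact subset_rfl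
  · exact ((hspec m).2.2 n h).2 hle

/-- `sup {e n | ω ∈ B n}`, and `0` if `ω` lies in no `B n`. -/
noncomputable def levelFn (e : ℕ → ℝ) (B : ℕ → Set Ω) (ω : Ω) : ℝ :=
  ⨆ n, (B n).indicator (fun _ => e n) ω

namespace NestedLevels

lemma bddAbove_indicator (hB : NestedLevels P e B) (ω : Ω) :
    BddAbove (range fun n => (B n).indicator (fun _ => e n) ω) :=
  ⟨1, forall_mem_range.2 fun n => by
    by_cases h : ω ∈ B n <;> simp [h, (hB.mem_Icc n).2]⟩

lemma levelFn_nonneg (hB : NestedLevels P e B) (ω : Ω) : 0 ≤ levelFn e B ω :=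
  Real.iSup_nonneg fun n => indicator_nonneg (fun _ _ => (hB.mem_Icc n).1) ω

lemma levelFn_le_one (hB : NestedLevels P e B) (ω : Ω) : levelFn e B ω ≤ 1 :=
  Real.iSup_le (fun n => by by_cases h : ω ∈ B n <;> simp [h, (hB.mem_Icc n).2]) zero_le_one

lemma le_levelFn (hB : NestedLevels P e B) {n : ℕ} {ω : Ω} (h : ω ∈ B n) :
    e n ≤ levelFn e B ω := by
  simpa [levelFn, h] using le_ciSup (hB.bddAbove_indicator ω) n

lemma lt_levelFn_iff (hB : NestedLevels P e B) {x : ℝ} (hx : 0 ≤ x) (ω : Ω) :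
    x < levelFn e B ω ↔ ∃ n, ω ∈ B n ∧ x < e n := by
  rw [levelFn, lt_ciSup_iff (hB.bddAbove_indicator ω)]
  refine exists_congr fun n => ?_
  by_cases h : ω ∈ B n <;> simp [h, hx]

lemma setOf_lt_levelFn (hB : NestedLevels P e B) {x : ℝ} (hx : 0 ≤ x) :
    {ω | x < levelFn e B ω} = ⋃ n : {n // x < e n}, B n := by
  ext ω
  simp [hB.lt_levelFn_iff hx, and_comm]

lemma measurable_levelFn (hB : NestedLevels P e B) : Measurable (levelFn e B) := by
  refine measurable_of_Ioi fun x => ?_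
  rcases lt_or_ge x 0 with hx | hx
  · convert MeasurableSet.univ
    exact eq_univ_of_forall fun ω => hx.trans_le (hB.levelFn_nonneg ω)
  · change MeasurableSet {ω | x < levelFn e B ω}
    rw [hB.setOf_lt_levelFn hx]
    exact .iUnion fun n => hB.measurableSet n

lemma le_measure_lt_levelFn (hB : NestedLevels P e B) {x ψ : ℝ} (hψ : ψ ∈ closure (range e))
    (hxψ : x < ψ) : ENNReal.ofReal (1 - ψ) ≤ P {ω | x < levelFn e B ω} := by
  refine ofReal_one_sub_le_of_forall_lt fun y hy => ?_
  obtain ⟨_, ⟨n, rfl⟩, hn⟩ := Metric.mem_closure_iff.1 hψ _ (lt_min (sub_pos.2 hxψ) (sub_pos.2 hy))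
  rw [Real.dist_eq, abs_lt] at hn
  have hxn : x < e n := by linarith [min_le_left (ψ - x) (y - ψ)]
  calc ENNReal.ofReal (1 - y) ≤ P (B n) := by
        rw [hB.measure_eq]
        exact ENNReal.ofReal_le_ofReal (by linarith [min_le_right (ψ - x) (y - ψ)])
    _ ≤ P {ω | x < levelFn e B ω} := measure_mono fun ω hω => hxn.trans_le (hB.le_levelFn hω)

variable [IsProbabilityMeasure P]

lemma measure_lt_levelFn_le (hB : NestedLevels P e B) (x : ℝ) :
    P {ω | x < levelFn e B ω} ≤ ENNReal.ofReal (1 - x) := by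
  rcases lt_or_ge x 0 with hx | hx
  · exact prob_le_one.trans (by rw [ENNReal.one_le_ofReal]; linarith)
  have hdir : Directed (· ⊆ ·) fun n : {n // x < e n} => B n := by
    intro m n
    rcases le_total (e m) (e n) with h | h
    · exact ⟨m, subset_rfl, hB.antitone m n h⟩
    · exact ⟨n, hB.antitone n m h, subset_rfl⟩
  rw [hB.setOf_lt_levelFn hx, hdir.measure_iUnion]
  exact iSup_le fun n => (hB.measure_eq n).trans_le (ENNReal.ofReal_le_ofReal (by linarith [n.2]))

lemma measure_lt_levelFn_eq (hB : NestedLevels P e B) {q : ℝ}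
    (hacc : ∀ y ∈ Ioc q 1, ∃ ψ ∈ closure (range e), q < ψ ∧ ψ ≤ y) :
    P {ω | q < levelFn e B ω} = ENNReal.ofReal (1 - q) := by
  refine le_antisymm (hB.measure_lt_levelFn_le q) (ofReal_one_sub_le_of_forall_lt fun y hy => ?_)
  rcases le_or_gt y 1 with hy1 | hy1
  · obtain ⟨ψ, hψ, hqψ, hψy⟩ := hacc y ⟨hy, hy1⟩
    exact (ENNReal.ofReal_le_ofReal (by linarith)).trans (hB.le_measure_lt_levelFn hψ hqψ)
  · simp [ENNReal.ofReal_eq_zero.2 (by linarith : 1 - y ≤ 0)]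

lemma measure_le_levelFn_eq (hB : NestedLevels P e B) {q : ℝ} (hq : q ∈ closure (range e)) :
    P {ω | q ≤ levelFn e B ω} = ENNReal.ofReal (1 - q) := by
  refine le_antisymm (le_ofReal_one_sub_of_forall_lt fun y hy => ?_) ?_
  · exact (measure_mono fun ω hω => hy.trans_le hω).trans (hB.measure_lt_levelFn_le y)
  obtain ⟨u, hu_mono, hu_lt, hu_lim⟩ := exists_seq_strictMono_tendsto q
  have hinter : {ω | q ≤ levelFn e B ω} = ⋂ k, {ω | u k < levelFn e B ω} := by
    ext ω
    simp only [mem_ofPred_eq, mem_iInter]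
    refine ⟨fun h k => (hu_lt k).trans_le h, fun h => not_lt.1 fun hlt => ?_⟩
    obtain ⟨k, hk⟩ := (hu_lim.eventually (lt_mem_nhds hlt)).exists
    exact (h k).not_gt hk
  rw [hinter, Antitone.measure_iInter (s := fun k => {ω | u k < levelFn e B ω})
    (fun k l hkl ω hω => (hu_mono.monotone hkl).trans_lt hω)
    (fun k => (measurableSet_lt measurable_const hB.measurable_levelFn).nullMeasurableSet)
    ⟨0, measure_ne_top _ _⟩]
  exact le_iInf fun k => hB.le_measure_lt_levelFn hq (hu_lt k)

end NestedLevels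

end Levels

section Quantile

variable {g : ℝ → ℝ} {p t u : ℝ}

/-- The distribution function of any random variable with quantile function `g`. -/
noncomputable def cdfOfQuantile (g : ℝ → ℝ) (t : ℝ) : ℝ :=
  sInf (insert 1 {u ∈ Icc (0:ℝ) 1 | t < g u})

lemma bddBelow_cdfOfQuantile_set : BddBelow (insert 1 {u ∈ Icc (0:ℝ) 1 | t < g u}) :=
  ⟨0, by rintro u (rfl | hu) <;> [exact zero_le_one; exact hu.1.1]⟩

lemma cdfOfQuantile_nonneg : 0 ≤ cdfOfQuantile g t :=
  le_csInf (insert_nonempty _ _) (by rintro u (rfl | hu) <;> [exact zero_le_one; exact hu.1.1])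

lemma cdfOfQuantile_le_one : cdfOfQuantile g t ≤ 1 :=
  csInf_le bddBelow_cdfOfQuantile_set (mem_insert _ _)

lemma cdfOfQuantile_le (hu : u ∈ Icc (0:ℝ) 1) (h : t < g u) : cdfOfQuantile g t ≤ u :=
  csInf_le bddBelow_cdfOfQuantile_set (mem_insert_of_mem _ ⟨hu, h⟩)

lemma le_of_lt_cdfOfQuantile (hu : 0 ≤ u) (h : u < cdfOfQuantile g t) : g u ≤ t :=
  not_lt.1 fun h' => (cdfOfQuantile_le ⟨hu, h.le.trans cdfOfQuantile_le_one⟩ h').not_gt h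

lemma lt_of_cdfOfQuantile_lt (hgm : MonotoneOn g (Icc 0 1)) (h : cdfOfQuantile g t < u)
    (hu : u ≤ 1) : t < g u := by
  obtain ⟨v, hv, hvu⟩ := (csInf_lt_iff bddBelow_cdfOfQuantile_set (insert_nonempty _ _)).1 h
  rcases hv with rfl | hv
  · exact absurd hu hvu.not_ge
  · exact hv.2.trans_le (hgm hv.1 ⟨hv.1.1.trans hvu.le, hu⟩ hvu.le)

lemma le_cdfOfQuantile (hgm : MonotoneOn g (Icc 0 1)) (hp : p ∈ Icc (0:ℝ) 1) (h : g p ≤ t) :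
    p ≤ cdfOfQuantile g t := by
  refine le_csInf (insert_nonempty _ _) ?_
  rintro u (rfl | hu)
  · exact hp.2
  · exact not_lt.1 fun hup => (hu.2.trans_le ((hgm hu.1 hp hup.le).trans h)).false

lemma le_cdfOfQuantile_iff (hg : MemG g) (hp : p ∈ Ioc (0:ℝ) 1) :
    p ≤ cdfOfQuantile g t ↔ g p ≤ t := by
  refine ⟨fun h => le_of_tendsto (hg.2.2 p hp) ?_, le_cdfOfQuantile hg.1 ⟨hp.1.le, hp.2⟩⟩
  filter_upwards [Ioo_mem_nhdsLT hp.1] with u hu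
  exact le_of_lt_cdfOfQuantile hu.1.le (hu.2.trans_le h)

lemma sInf_setOf_cdfOfQuantile_pos (hg : MemG g) : sInf {t | 0 < cdfOfQuantile g t} = g 0 := by
  have hmem : ∀ u ∈ Ioc (0:ℝ) 1, g u ∈ {t | 0 < cdfOfQuantile g t} := fun u hu =>
    hu.1.trans_le (le_cdfOfQuantile hg.1 ⟨hu.1.le, hu.2⟩ le_rfl)
  refine IsGLB.csInf_eq ⟨fun t ht => not_lt.1 fun hlt => ?_, fun b hb => ?_⟩
    ⟨_, hmem 1 ⟨one_pos, le_rfl⟩⟩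
  · exact ht.not_ge (cdfOfQuantile_le ⟨le_rfl, zero_le_one⟩ hlt)
  · refine ge_of_tendsto hg.2.1 ?_
    filter_upwards [Ioo_mem_nhdsGT one_pos] with u hu
    exact hb (hmem u ⟨hu.1, hu.2.le⟩)

lemma cdfOfQuantile_mem_PSI (hgm : MonotoneOn g (Icc 0 1)) (h0 : 0 < cdfOfQuantile g t ∨ g 0 ≤ t)
    (h1 : cdfOfQuantile g t < 1 ∨ t < g 1) : cdfOfQuantile g t ∈ PSI g := by
  set q := cdfOfQuantile g t
  rcases le_or_gt (g q) t with hq | hq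
  · have hq1 : q < 1 := h1.elim id fun h => cdfOfQuantile_le_one.lt_of_ne fun heq =>
      (h.trans_le (by simpa [q, heq] using hq)).false
    exact Or.inl ⟨⟨cdfOfQuantile_nonneg, hq1⟩,
      fun s hs => hq.trans_lt (lt_of_cdfOfQuantile_lt hgm hs.1 hs.2)⟩
  · have hq0 : 0 < q := h0.elim id fun h => cdfOfQuantile_nonneg.lt_of_ne fun heq =>
      (hq.trans_le (by simpa [q, ← heq] using h)).false
    exact Or.inr ⟨⟨hq0, cdfOfQuantile_le_one⟩,
      fun s hs => (le_of_lt_cdfOfQuantile hs.1 hs.2).trans_lt hq⟩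

end Quantile

section RightLim

variable {g : ℝ → ℝ} {q u x : ℝ}

/-- The right-continuous version of `g` on `[0,1]`, extended by constants outside. -/
noncomputable def rightLimIcc (g : ℝ → ℝ) : ℝ → ℝ :=
  Function.rightLim (IccExtend (zero_le_one' ℝ) fun u : Icc (0:ℝ) 1 => g u)

lemma monotone_IccExtend (hgm : MonotoneOn g (Icc 0 1)) :
    Monotone (IccExtend (zero_le_one' ℝ) fun u : Icc (0:ℝ) 1 => g u) :=
  (monotoneOn_iff_monotone.1 hgm).IccExtend _

lemma monotone_rightLimIcc (hgm : MonotoneOn g (Icc 0 1)) : Monotone (rightLimIcc g) :=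
  (monotone_IccExtend hgm).rightLim

lemma rightLimIcc_le (hgm : MonotoneOn g (Icc 0 1)) (hu : u ∈ Icc (0:ℝ) 1) (hxu : x < u) :
    rightLimIcc g x ≤ g u := by
  simpa [rightLimIcc, IccExtend_of_mem _ _ hu] using (monotone_IccExtend hgm).rightLim_le hxu

lemma le_rightLimIcc (hgm : MonotoneOn g (Icc 0 1)) (hu : u ∈ Icc (0:ℝ) 1) (hux : u ≤ x) :
    g u ≤ rightLimIcc g x := by
  simpa [rightLimIcc, IccExtend_of_mem _ _ hu] using (monotone_IccExtend hgm).le_rightLim hux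

lemma rightLimIcc_one_le (hgm : MonotoneOn g (Icc 0 1)) : rightLimIcc g 1 ≤ g 1 := by
  simpa [rightLimIcc, IccExtend_of_right_le _ _ one_le_two] using
    (monotone_IccExtend hgm).rightLim_le one_lt_two

lemma exists_mem_PSI_Ioc (hgm : MonotoneOn g (Icc 0 1)) (hq : 0 ≤ q) {y : ℝ} (hy : y ∈ Ioc q 1)
    (h : rightLimIcc g q < g y) : ∃ ψ ∈ PSI g, q < ψ ∧ ψ ≤ y := by
  obtain ⟨u, hgu, hu⟩ := ((((monotone_IccExtend hgm).tendsto_rightLim q).eventually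
    (eventually_lt_nhds h)).and (Ioo_mem_nhdsGT hy.1)).exists
  have huI : u ∈ Icc (0:ℝ) 1 := ⟨hq.trans hu.1.le, hu.2.le.trans hy.2⟩
  rw [IccExtend_of_mem _ _ huI] at hgu
  have hg0 : g 0 ≤ g u := hgm ⟨le_rfl, zero_le_one⟩ huI huI.1
  have hg1 : g u < g 1 := hgu.trans_le (hgm ⟨hq.trans hy.1.le, hy.2⟩ ⟨zero_le_one, le_rfl⟩ hy.2)
  exact ⟨cdfOfQuantile g (g u), cdfOfQuantile_mem_PSI hgm (Or.inr hg0) (Or.inr hg1),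
    hu.1.trans_le (le_cdfOfQuantile hgm huI le_rfl), cdfOfQuantile_le ⟨hq.trans hy.1.le, hy.2⟩ hgu⟩

lemma rightLimIcc_le_of_lt_cdfOfQuantile (hgm : MonotoneOn g (Icc 0 1)) {t : ℝ} (hx : 0 ≤ x)
    (h : x < cdfOfQuantile g t) : rightLimIcc g x ≤ t := by
  obtain ⟨u, hxu, hu⟩ := exists_between h
  exact (rightLimIcc_le hgm ⟨hx.trans hxu.le, hu.le.trans cdfOfQuantile_le_one⟩ hxu).trans
    (le_of_lt_cdfOfQuantile (hx.trans hxu.le) hu)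

lemma lt_rightLimIcc_of_cdfOfQuantile_lt (hgm : MonotoneOn g (Icc 0 1)) {t : ℝ} (hx : x ≤ 1)
    (h : cdfOfQuantile g t < x) : t < rightLimIcc g x :=
  (lt_of_cdfOfQuantile_lt hgm h hx).trans_le
    (le_rightLimIcc hgm ⟨cdfOfQuantile_nonneg.trans h.le, hx⟩ le_rfl)

end RightLim

section Realization

variable {Ω : Type*} [MeasurableSpace Ω] {P : Measure Ω} {g : ℝ → ℝ}

lemma Q_eq_of_measure_le_eq (hg : MemG g) {Z : Ω → ℝ}
    (hZ : ∀ t, P {ω | Z ω ≤ t} = ENNReal.ofReal (cdfOfQuantile g t)) :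
    ∀ p ∈ Icc (0:ℝ) 1, Q P Z p = g p := by
  intro p hp
  rcases hp.1.eq_or_lt with rfl | hp0
  · rw [Q, if_pos rfl, rightQuantile]
    simp_rw [hZ, ENNReal.ofReal_zero, ENNReal.ofReal_pos]
    exact sInf_setOf_cdfOfQuantile_pos hg
  · rw [Q, if_neg hp0.ne', leftQuantile]
    simp_rw [hZ, ENNReal.ofReal_le_ofReal_iff cdfOfQuantile_nonneg,
      le_cdfOfQuantile_iff hg ⟨hp0, hp.2⟩]
    exact csInf_Ici

variable [IsProbabilityMeasure P] {e : ℕ → ℝ} {B : ℕ → Set Ω}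

/-- Above level `q = cdfOfQuantile g t` the variable exceeds `t`, below it it does not; at `q`
itself it depends on the side from which `rightLimIcc g` crosses `t`, and in either case the
probability of the relevant level set is forced by density of the levels in `PSI g`. -/
lemma NestedLevels.measure_lt_rightLimIcc_levelFn (hB : NestedLevels P e B)
    (hgm : MonotoneOn g (Icc 0 1)) (he0 : 0 ∈ range e) (hdense : PSI g ⊆ closure (range e))
    (t : ℝ) :
    P {ω | t < rightLimIcc g (levelFn e B ω)} = ENNReal.ofReal (1 - cdfOfQuantile g t) := by
  set q := cdfOfQuantile g t
  rcases lt_or_ge t (rightLimIcc g q) with hlt | hge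
  · have hset : {ω | t < rightLimIcc g (levelFn e B ω)} = {ω | q ≤ levelFn e B ω} := by
      ext ω
      exact ⟨fun h => not_lt.1 fun hω => (rightLimIcc_le_of_lt_cdfOfQuantile hgm
        (hB.levelFn_nonneg ω) hω).not_gt h, fun h => hlt.trans_le (monotone_rightLimIcc hgm h)⟩
    rw [hset, hB.measure_le_levelFn_eq]
    rcases (cdfOfQuantile_nonneg (g := g) (t := t)).eq_or_lt with h0 | h0
    · rw [show q = 0 from h0.symm]
      exact subset_closure he0
    · refine hdense (cdfOfQuantile_mem_PSI hgm (Or.inl h0) ?_)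
      exact cdfOfQuantile_le_one.lt_or_eq.imp_right fun h1 =>
        hlt.trans_le (by simpa [q, h1] using rightLimIcc_one_le hgm)
  · have hset : {ω | t < rightLimIcc g (levelFn e B ω)} = {ω | q < levelFn e B ω} := by
      ext ω
      exact ⟨fun h => not_le.1 fun hω => ((monotone_rightLimIcc hgm hω).trans hge).not_gt h,
        lt_rightLimIcc_of_cdfOfQuantile_lt hgm (hB.levelFn_le_one ω)⟩
    rw [hset, hB.measure_lt_levelFn_eq]
    intro y hy
    obtain ⟨ψ, hψ, hqψ⟩ := exists_mem_PSI_Ioc hgm cdfOfQuantile_nonneg hy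
      (hge.trans_lt (lt_of_cdfOfQuantile_lt hgm hy.1 hy.2))
    exact ⟨ψ, hdense hψ, hqψ⟩

lemma NestedLevels.measure_rightLimIcc_levelFn_le (hB : NestedLevels P e B)
    (hgm : MonotoneOn g (Icc 0 1)) (he0 : 0 ∈ range e) (hdense : PSI g ⊆ closure (range e))
    (t : ℝ) :
    P {ω | rightLimIcc g (levelFn e B ω) ≤ t} = ENNReal.ofReal (cdfOfQuantile g t) := by
  have hm : MeasurableSet {ω | t < rightLimIcc g (levelFn e B ω)} :=
    measurableSet_lt measurable_const
      ((monotone_rightLimIcc hgm).measurable.comp hB.measurable_levelFn)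
  have hcompl : {ω | rightLimIcc g (levelFn e B ω) ≤ t} =
      {ω | t < rightLimIcc g (levelFn e B ω)}ᶜ := by
    ext; simp
  rw [hcompl, prob_compl_eq_one_sub hm, hB.measure_lt_rightLimIcc_levelFn hgm he0 hdense,
    ← ENNReal.ofReal_one, ← ENNReal.ofReal_sub _ (sub_nonneg.2 cdfOfQuantile_le_one)]
  simp_rw [sub_sub_cancel]

end Realization

section Comonotone

variable {Ω : Type*} [MeasurableSpace Ω] {P : Measure Ω} {X Z : Ω → ℝ}

lemma comonotonePair_of_forall_lt {N : Set Ω} (hN : P N = 0)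
    (h : ∀ ω ∉ N, ∀ ω' ∉ N, Z ω' < Z ω → X ω' ≤ X ω) : ComonotonePair P X Z := by
  have hN' : ∀ᵐ ω ∂P, ω ∉ N := measure_eq_zero_iff_ae_notMem.1 hN
  filter_upwards [Measure.quasiMeasurePreserving_fst.ae hN',
    Measure.quasiMeasurePreserving_snd.ae hN'] with w h₁ h₂
  rcases lt_trichotomy (Z w.1) (Z w.2) with hlt | heq | hgt
  · exact mul_nonneg_of_nonpos_of_nonpos (sub_nonpos.2 (h _ h₂ _ h₁ hlt)) (sub_nonpos.2 hlt.le)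
  · simp [heq]
  · exact mul_nonneg (sub_nonneg.2 (h _ h₁ _ h₂ hgt)) (sub_nonneg.2 hgt.le)

lemma NestedLevels.comonotonePair {e : ℕ → ℝ} {B : ℕ → Set Ω} (hB : NestedLevels P e B)
    (htail : ∀ n, IsTailEvent P X (B n)) {f : ℝ → ℝ} (hf : Monotone f) :
    ComonotonePair P X fun ω => f (levelFn e B ω) := by
  choose N hN htailN using fun n => (htail n).2
  refine comonotonePair_of_forall_lt (measure_iUnion_null hN) fun ω hω ω' hω' hlt => ?_
  obtain ⟨n, hωn, hn⟩ := (hB.lt_levelFn_iff (hB.levelFn_nonneg ω') ω).1 (hf.reflect_lt hlt)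
  exact htailN n ω hωn (fun h => hω (mem_iUnion_of_mem n h)) ω'
    (fun h => hn.not_ge (hB.le_levelFn h)) fun h => hω' (mem_iUnion_of_mem n h)

end Comonotone

section Backward

variable {Ω : Type*} [MeasurableSpace Ω] {P : Measure Ω} [IsProbabilityMeasure P] {g : ℝ → ℝ}
  {d : ℕ} {X : Fin d → Ω → ℝ}

lemma PSI_subset_Icc : PSI g ⊆ Icc 0 1 := by
  rintro p (⟨hp, -⟩ | ⟨hp, -⟩) <;> [exact Ico_subset_Icc_self hp; exact Ioc_subset_Icc_self hp]

lemma PConcentrated.exists_isCommonTailEvent (hP : Atomless P) {p : ℝ} (hp : 0 ≤ p)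
    (h : PConcentrated P X p) : ∃ A, IsCommonTailEvent P X A ∧ P A = ENNReal.ofReal (1 - p) := by
  obtain ⟨A, hA⟩ := h
  rcases isEmpty_or_nonempty (Fin d) with hd | ⟨⟨i⟩⟩
  · obtain ⟨A', -, hA', hPA'⟩ := hP univ .univ (ENNReal.ofReal (1 - p))
      (by rw [measure_univ]; exact ENNReal.ofReal_le_one.2 (by linarith))
    exact ⟨A', ⟨hA', isEmptyElim⟩, hPA'⟩
  · exact ⟨A, ⟨(hA i).1.1, fun j => (hA j).1⟩, (hA i).2⟩

theorem gComonotone_of_kConcentrated (hP : Atomless P) (hg : MemG g)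
    (h : KConcentrated P X (PSI g)) : GComonotone P g X := by
  obtain ⟨D, hDPSI, hDc, hDdense⟩ :=
    (TopologicalSpace.IsSeparable.of_separableSpace (PSI g)).exists_countable_dense_subset
  -- the level `0` (event `univ`) makes the enumeration possible and covers `PSI g = ∅`
  obtain ⟨e, he⟩ := (hDc.insert 0).exists_eq_range (insert_nonempty 0 D)
  have hlevels : ∀ n, e n = 0 ∨ e n ∈ PSI g := fun n =>
    (he ▸ mem_range_self n : e n ∈ insert 0 D).imp id fun h => hDPSI h
  have hI : ∀ n, e n ∈ Icc (0:ℝ) 1 := fun n =>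
    (hlevels n).elim (fun h => by simp [h]) fun h => PSI_subset_Icc h
  have hgood : ∀ n, ∃ A, IsCommonTailEvent P X A ∧ P A = ENNReal.ofReal (1 - e n) := fun n =>
    (hlevels n).elim (fun h => ⟨univ, isCommonTailEvent_univ, by simp [h]⟩)
      fun h' => (h _ h').exists_isCommonTailEvent hP (hI n).1
  obtain ⟨B, hB, htail⟩ := exists_nestedLevels hP hI hgood
  have hdense : PSI g ⊆ closure (range e) :=
    hDdense.trans (closure_mono (he ▸ subset_insert 0 D))
  exact ⟨fun ω => rightLimIcc g (levelFn e B ω),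
    (monotone_rightLimIcc hg.1).measurable.comp hB.measurable_levelFn,
    Q_eq_of_measure_le_eq hg (hB.measure_rightLimIcc_levelFn_le hg.1 (he ▸ mem_insert 0 D) hdense),
    fun i => hB.comonotonePair (fun n => (htail n).2 i) (monotone_rightLimIcc hg.1)⟩

end Backward

theorem stmt_15_general {Ω : Type*} [MeasurableSpace Ω] (P : MeasureTheory.Measure Ω)
    [MeasureTheory.IsProbabilityMeasure P] (hP : Atomless P)
    (g : ℝ → ℝ) (hg : MemG g)
    {d : ℕ} (X : Fin d → Ω → ℝ) :
    GComonotone P g X ↔ KConcentrated P X (PSI g) :=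
  ⟨kConcentrated_of_gComonotone, gComonotone_of_kConcentrated hP hg⟩

/-- For `g ∈ 𝒢`, a random vector is `g`-comonotonic iff it is
`PSI(g)`-concentrated. -/
theorem stmt_15 {Ω : Type*} [MeasurableSpace Ω] (P : MeasureTheory.Measure Ω)
    [MeasureTheory.IsProbabilityMeasure P] (hP : Atomless P)
    (g : ℝ → ℝ) (hg : MemG g)
    {d : ℕ} (X : Fin d → Ω → ℝ) (hX : ∀ i, Measurable (X i)) :
    GComonotone P g X ↔ KConcentrated P X (PSI g) :=
  stmt_15_general P hP g hg X
end
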